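/- arXiv:1908.07830 — 7 statements merged into one kernel-verified Lean document; each statement's English description precedes it below -/
import Mathlib

section
/- Let A be a nonnegative random variable whose law has density a on (0,∞), and let (U,V) be a random vector, independent of A, taking values in (0,∞)² and whose law has a density f with respect to two-dimensional Lebesgue measure. If A·U + V has the same distribution as A, then for Lebesgue-almost every r > 0: a(r) = ∫₀^∞ (a(s)/s) · ( ∫₀^r f((r−v)/s, v) dv ) ds. -/
open MeasureTheory ProbabilityTheory Filter Set
open scoped ENNReal

/-!
For a fixed scale `s ≠ 0`, the substitution `u = (r - v) / s` shows that `s * U + V` has density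
`r ↦ |s|⁻¹ ∫ f((r - v) / s, v) dv`; integrating this over the law of the independent factor `A`
(Tonelli) gives a density of `A * U + V`. Since `A * U + V` and `A` have the same law, the two
densities agree almost everywhere, and the support of `f` in the positive quadrant restricts the
inner integral to `0 < v < r`.
-/

theorem MeasureTheory.Measure.eq_withDensity_indicator_of_apply_eq_ofReal_integral
    {α : Type*} [MeasurableSpace α] {μ ν : Measure α} [NeZero μ] {g : α → ℝ} {S : Set α}
    (hS : MeasurableSet S) (hg : ∀ x, 0 ≤ g x)
    (h : ∀ B, MeasurableSet B → μ B = ENNReal.ofReal (∫ x in B ∩ S, g x ∂ν)) :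
    μ = ν.withDensity (S.indicator fun x => ENNReal.ofReal (g x)) := by
  have hint : IntegrableOn g S ν := by
    by_contra hg_int
    have hμ := h univ MeasurableSet.univ
    rw [univ_inter, integral_undef hg_int, ENNReal.ofReal_zero, Measure.measure_univ_eq_zero] at hμ
    exact NeZero.ne μ hμ
  ext B hB
  rw [withDensity_apply _ hB, h B hB,
    ofReal_integral_eq_lintegral_ofReal (hint.mono_set inter_subset_right)
      (Eventually.of_forall fun x => hg x),
    lintegral_indicator hS, Measure.restrict_restrict hS, inter_comm]

theorem lintegral_comp_mul_add {s : ℝ} (hs : s ≠ 0) (v : ℝ) {F : ℝ → ℝ≥0∞} (hF : Measurable F) :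
    ∫⁻ u, F (s * u + v) = ENNReal.ofReal |s⁻¹| * ∫⁻ r, F r := by
  have hmap : Measure.map (fun u : ℝ => s * u + v) volume = ENNReal.ofReal |s⁻¹| • volume := by
    rw [show (fun u : ℝ => s * u + v) = (· + v) ∘ (s * ·) from rfl,
      ← Measure.map_map (measurable_add_const v) (measurable_const_mul s),
      Real.map_volume_mul_left hs, Measure.map_smul, map_add_right_eq_self volume v]
  rw [← lintegral_map hF (by fun_prop), hmap, lintegral_smul_measure, smul_eq_mul]

/-- The density of `s * W.1 + W.2` when `W` has density `h`. -/
noncomputable def mulAddDensity (h : ℝ × ℝ → ℝ≥0∞) (s r : ℝ) : ℝ≥0∞ :=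
  ENNReal.ofReal |s⁻¹| * ∫⁻ v, h ((r - v) / s, v)

/-- The density of `A * W.1 + W.2` when `A` has density `g` and `W`, independent of `A`,
has density `h`. -/
noncomputable def perpetuityDensity (g : ℝ → ℝ≥0∞) (h : ℝ × ℝ → ℝ≥0∞) (r : ℝ) : ℝ≥0∞ :=
  ∫⁻ s, g s * mulAddDensity h s r

@[fun_prop]
theorem Measurable.mulAddDensity {α : Type*} [MeasurableSpace α] {h : ℝ × ℝ → ℝ≥0∞}
    (hh : Measurable h) {s r : α → ℝ} (hs : Measurable s) (hr : Measurable r) :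
    Measurable fun x => mulAddDensity h (s x) (r x) := by
  have hslice : Measurable fun z : α × ℝ => h ((r z.1 - z.2) / s z.1, z.2) := by fun_prop
  exact (hs.inv.abs.ennreal_ofReal).mul hslice.lintegral_prod_right'

theorem measurable_perpetuityDensity {g : ℝ → ℝ≥0∞} {h : ℝ × ℝ → ℝ≥0∞} (hg : Measurable g)
    (hh : Measurable h) : Measurable (perpetuityDensity g h) := by
  have hK : Measurable fun z : ℝ × ℝ => g z.2 * mulAddDensity h z.2 z.1 := by fun_prop
  exact hK.lintegral_prod_right'

theorem lintegral_mul_comp_mul_add {h : ℝ × ℝ → ℝ≥0∞} {F : ℝ → ℝ≥0∞} (hh : Measurable h)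
    (hF : Measurable F) {s : ℝ} (hs : s ≠ 0) :
    ∫⁻ w : ℝ × ℝ, h w * F (s * w.1 + w.2) = ∫⁻ r, mulAddDensity h s r * F r := by
  have hmeas : Measurable fun z : ℝ × ℝ => h ((z.2 - z.1) / s, z.1) * F z.2 := by fun_prop
  calc ∫⁻ w : ℝ × ℝ, h w * F (s * w.1 + w.2)
      = ∫⁻ v, ∫⁻ u, h (u, v) * F (s * u + v) := by
        rw [Measure.volume_eq_prod]
        exact lintegral_prod_symm' _ (hh.mul (hF.comp (by fun_prop)))
    _ = ∫⁻ v, ENNReal.ofReal |s⁻¹| * ∫⁻ r, h ((r - v) / s, v) * F r := by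
        refine lintegral_congr fun v => ?_
        have hmeas_v : Measurable fun r => h ((r - v) / s, v) * F r := by fun_prop
        rw [← lintegral_comp_mul_add hs v hmeas_v]
        simp only [add_sub_cancel_right, mul_div_cancel_left₀ _ hs]
    _ = ∫⁻ r, ENNReal.ofReal |s⁻¹| * ∫⁻ v, h ((r - v) / s, v) * F r := by
        rw [lintegral_const_mul _ hmeas.lintegral_prod_right', lintegral_lintegral_swap
          hmeas.aemeasurable]
        exact (lintegral_const_mul _ (hmeas.comp measurable_swap).lintegral_prod_right').symm
    _ = ∫⁻ r, mulAddDensity h s r * F r := by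
        refine lintegral_congr fun r => ?_
        have hmeas_r : Measurable fun v => h ((r - v) / s, v) := by fun_prop
        rw [lintegral_mul_const _ hmeas_r, mulAddDensity, mul_assoc]

section Law

variable {g : ℝ → ℝ≥0∞} {h : ℝ × ℝ → ℝ≥0∞}

theorem lintegral_comp_mul_add_prod_withDensity (hg : Measurable g) (hh : Measurable h)
    {F : ℝ → ℝ≥0∞} (hF : Measurable F) :
    ∫⁻ p : ℝ × ℝ × ℝ, F (p.1 * p.2.1 + p.2.2)
        ∂((volume.withDensity g).prod (volume.withDensity h)) =
      ∫⁻ r, perpetuityDensity g h r * F r := by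
  have hK : Measurable fun q : ℝ × ℝ => g q.1 * mulAddDensity h q.1 q.2 * F q.2 := by fun_prop
  calc ∫⁻ p : ℝ × ℝ × ℝ, F (p.1 * p.2.1 + p.2.2)
          ∂((volume.withDensity g).prod (volume.withDensity h))
      = ∫⁻ s, g s * ∫⁻ w : ℝ × ℝ, h w * F (s * w.1 + w.2) := by
        rw [lintegral_prod _ (by fun_prop), lintegral_withDensity_eq_lintegral_mul _ hg]
        · refine lintegral_congr fun s => congrArg (g s * ·) ?_
          exact lintegral_withDensity_eq_lintegral_mul _ hh
            (by fun_prop : Measurable fun w : ℝ × ℝ => F (s * w.1 + w.2))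
        · exact Measurable.lintegral_prod_right'
            (by fun_prop : Measurable fun q : ℝ × ℝ × ℝ => F (q.1 * q.2.1 + q.2.2))
    _ = ∫⁻ s, ∫⁻ r, g s * mulAddDensity h s r * F r := by
        refine lintegral_congr_ae ?_
        filter_upwards [Measure.ae_ne volume 0] with s hs
        simp only [lintegral_mul_comp_mul_add hh hF hs, mul_assoc]
        exact (lintegral_const_mul _ (by fun_prop)).symm
    _ = ∫⁻ r, perpetuityDensity g h r * F r := by
        rw [lintegral_lintegral_swap hK.aemeasurable]
        exact lintegral_congr fun r => lintegral_mul_const _ (by fun_prop)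

theorem map_mul_add_prod_withDensity (hg : Measurable g) (hh : Measurable h) :
    ((volume.withDensity g).prod (volume.withDensity h)).map
        (fun p : ℝ × ℝ × ℝ => p.1 * p.2.1 + p.2.2) =
      volume.withDensity (perpetuityDensity g h) := by
  refine Measure.ext_of_lintegral _ fun F hF => ?_
  rw [lintegral_map hF (by fun_prop), lintegral_comp_mul_add_prod_withDensity hg hh hF,
    lintegral_withDensity_eq_lintegral_mul _ (measurable_perpetuityDensity hg hh) hF]
  rfl

end Law

section Indicator

variable {a : ℝ → ℝ} {f : ℝ × ℝ → ℝ} {r : ℝ}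

/-- No integrability is needed: `toReal ∞ = 0` matches the junk value of the Bochner integral. -/
theorem toReal_mulAddDensity_indicator (hf : Measurable f) (hf_nn : ∀ p, 0 ≤ f p) {s : ℝ}
    (hs : 0 < s) (hr : 0 ≤ r) :
    (mulAddDensity ((Ioi 0 ×ˢ Ioi 0).indicator fun p => ENNReal.ofReal (f p)) s r).toReal =
      s⁻¹ * ∫ v in 0..r, f ((r - v) / s, v) := by
  have hmem : ∀ v, ((r - v) / s, v) ∈ Ioi (0 : ℝ) ×ˢ Ioi 0 ↔ v ∈ Ioo 0 r := fun v => by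
    simp [div_pos_iff_of_pos_right hs, and_comm]
  have hslice : ∫⁻ v, (Ioi 0 ×ˢ Ioi 0).indicator (fun p => ENNReal.ofReal (f p)) ((r - v) / s, v) =
      ∫⁻ v in Ioo 0 r, ENNReal.ofReal (f ((r - v) / s, v)) := by
    rw [← lintegral_indicator measurableSet_Ioo]
    simp only [indicator_apply, hmem]
  rw [mulAddDensity, hslice, ENNReal.toReal_mul, ENNReal.toReal_ofReal (abs_nonneg _),
    abs_of_pos (inv_pos.2 hs), intervalIntegral.integral_of_le hr, integral_Ioc_eq_integral_Ioo,
    integral_eq_lintegral_of_nonneg_ae (Eventually.of_forall fun v => hf_nn _)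
      (hf.comp (by fun_prop)).aestronglyMeasurable]

theorem toReal_perpetuityDensity_indicator (ha : Measurable a) (ha_nn : ∀ s, 0 ≤ a s)
    (hf : Measurable f) (hf_nn : ∀ p, 0 ≤ f p) (hr : 0 ≤ r)
    (hfin : perpetuityDensity ((Ioi 0).indicator fun s => ENNReal.ofReal (a s))
      ((Ioi 0 ×ˢ Ioi 0).indicator fun p => ENNReal.ofReal (f p)) r ≠ ∞) :
    (perpetuityDensity ((Ioi 0).indicator fun s => ENNReal.ofReal (a s))
      ((Ioi 0 ×ˢ Ioi 0).indicator fun p => ENNReal.ofReal (f p)) r).toReal =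
      ∫ s in Ioi 0, a s / s * ∫ v in 0..r, f ((r - v) / s, v) := by
  set ga := (Ioi (0 : ℝ)).indicator fun s => ENNReal.ofReal (a s)
  set gf := (Ioi (0 : ℝ) ×ˢ Ioi 0).indicator fun p => ENNReal.ofReal (f p)
  have hga : Measurable ga := ha.ennreal_ofReal.indicator measurableSet_Ioi
  have hgf : Measurable gf := hf.ennreal_ofReal.indicator (measurableSet_Ioi.prod measurableSet_Ioi)
  have hK : Measurable fun s => ga s * mulAddDensity gf s r := by fun_prop
  rw [perpetuityDensity, ← integral_toReal hK.aemeasurable (ae_lt_top hK hfin),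
    ← integral_indicator measurableSet_Ioi]
  refine integral_congr_ae (Eventually.of_forall fun s => ?_)
  by_cases hs : s ∈ Ioi 0
  · simp only [indicator_of_mem hs, ga, ENNReal.toReal_mul, ENNReal.toReal_ofReal (ha_nn s)]
    rw [toReal_mulAddDensity_indicator hf hf_nn hs hr, div_eq_mul_inv, mul_assoc]
  · simp [indicator_of_notMem hs, ga]

end Indicator

theorem stmt_3_general {Ω : Type*} [MeasurableSpace Ω] (P : Measure Ω) [IsProbabilityMeasure P]
    (A U V : Ω → ℝ) (hA : Measurable A) (hU : Measurable U) (hV : Measurable V)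
    (hindep : IndepFun A (fun ω => (U ω, V ω)) P)
    (a : ℝ → ℝ) (ha_meas : Measurable a) (ha_nn : ∀ r, 0 ≤ a r)
    (ha_dens : ∀ B : Set ℝ, MeasurableSet B →
      Measure.map A P B = ENNReal.ofReal (∫ r in B ∩ Set.Ioi 0, a r))
    (f : ℝ × ℝ → ℝ) (hf_meas : Measurable f) (hf_nn : ∀ p, 0 ≤ f p)
    (hf_dens : ∀ B : Set (ℝ × ℝ), MeasurableSet B →
      Measure.map (fun ω => (U ω, V ω)) P B =
        ENNReal.ofReal (∫ p in B ∩ Set.Ioi 0 ×ˢ Set.Ioi 0, f p))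
    (hfix : Measure.map (fun ω => A ω * U ω + V ω) P = Measure.map A P) :
    ∀ᵐ r ∂(volume.restrict (Set.Ioi (0 : ℝ))),
      a r = ∫ s in Set.Ioi (0 : ℝ), (a s / s) * ∫ v in (0 : ℝ)..r, f ((r - v) / s, v) := by
  set ga := (Ioi (0 : ℝ)).indicator fun s => ENNReal.ofReal (a s)
  set gf := (Ioi (0 : ℝ) ×ˢ Ioi 0).indicator fun p => ENNReal.ofReal (f p)
  have hga : Measurable ga := ha_meas.ennreal_ofReal.indicator measurableSet_Ioi
  have hgf : Measurable gf :=
    hf_meas.ennreal_ofReal.indicator (measurableSet_Ioi.prod measurableSet_Ioi)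
  have hUV : Measurable fun ω => (U ω, V ω) := hU.prodMk hV
  have := Measure.isProbabilityMeasure_map (μ := P) hA.aemeasurable
  have := Measure.isProbabilityMeasure_map (μ := P) hUV.aemeasurable
  have hlawA : P.map A = volume.withDensity ga :=
    Measure.eq_withDensity_indicator_of_apply_eq_ofReal_integral measurableSet_Ioi ha_nn ha_dens
  have hlawUV : P.map (fun ω => (U ω, V ω)) = volume.withDensity gf :=
    Measure.eq_withDensity_indicator_of_apply_eq_ofReal_integral
      (measurableSet_Ioi.prod measurableSet_Ioi) hf_nn hf_dens
  have hlaw_fix : volume.withDensity ga = volume.withDensity (perpetuityDensity ga gf) :=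
    calc volume.withDensity ga = P.map fun ω => A ω * U ω + V ω := by rw [hfix, hlawA]
      _ = (P.map fun ω => (A ω, (U ω, V ω))).map fun p => p.1 * p.2.1 + p.2.2 :=
        (Measure.map_map (g := fun p : ℝ × ℝ × ℝ => p.1 * p.2.1 + p.2.2) (by fun_prop)
          (hA.prodMk hUV)).symm
      _ = volume.withDensity (perpetuityDensity ga gf) := by
        rw [(indepFun_iff_map_prod_eq_prod_map_map hA.aemeasurable hUV.aemeasurable).1 hindep,
          hlawA, hlawUV, map_mul_add_prod_withDensity hga hgf]
  have hae : ga =ᵐ[volume] perpetuityDensity ga gf :=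
    (withDensity_eq_iff_of_sigmaFinite hga.aemeasurable
      (measurable_perpetuityDensity hga hgf).aemeasurable).1 hlaw_fix
  filter_upwards [ae_restrict_of_ae hae, ae_restrict_mem measurableSet_Ioi] with r hr_eq hr
  have hr_ofReal : ENNReal.ofReal (a r) = perpetuityDensity ga gf r :=
    (indicator_of_mem hr _).symm.trans hr_eq
  rw [← toReal_perpetuityDensity_indicator ha_meas ha_nn hf_meas hf_nn hr.le
    (hr_ofReal ▸ ENNReal.ofReal_ne_top), ← hr_ofReal, ENNReal.toReal_ofReal (ha_nn r)]

/-- If `A` has density `a` on `(0,∞)`, `(U,V)` is independent of `A` with a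
density `f` on `(0,∞)²`, and `A·U + V =ᵈ A`, then for Lebesgue-a.e. `r > 0`,
`a(r) = ∫₀^∞ (a(s)/s) (∫₀^r f((r−v)/s, v) dv) ds`. -/
theorem stmt_3 {Ω : Type*} [MeasurableSpace Ω] (P : Measure Ω) [IsProbabilityMeasure P]
    (A U V : Ω → ℝ) (hA : Measurable A) (hU : Measurable U) (hV : Measurable V)
    (hAnn : ∀ᵐ ω ∂P, 0 ≤ A ω)
    (hUVpos : ∀ᵐ ω ∂P, 0 < U ω ∧ 0 < V ω)
    (hindep : IndepFun A (fun ω => (U ω, V ω)) P)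
    (a : ℝ → ℝ) (ha_meas : Measurable a) (ha_nn : ∀ r, 0 ≤ a r)
    (ha_dens : ∀ B : Set ℝ, MeasurableSet B →
      Measure.map A P B = ENNReal.ofReal (∫ r in B ∩ Set.Ioi 0, a r))
    (f : ℝ × ℝ → ℝ) (hf_meas : Measurable f) (hf_nn : ∀ p, 0 ≤ f p)
    (hf_dens : ∀ B : Set (ℝ × ℝ), MeasurableSet B →
      Measure.map (fun ω => (U ω, V ω)) P B =
        ENNReal.ofReal (∫ p in B ∩ Set.Ioi 0 ×ˢ Set.Ioi 0, f p))
    (hfix : Measure.map (fun ω => A ω * U ω + V ω) P = Measure.map A P) :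
    ∀ᵐ r ∂(volume.restrict (Set.Ioi (0 : ℝ))),
      a r = ∫ s in Set.Ioi (0 : ℝ), (a s / s) * ∫ v in (0 : ℝ)..r, f ((r - v) / s, v) :=
  stmt_3_general P A U V hA hU hV hindep a ha_meas ha_nn ha_dens f hf_meas hf_nn hf_dens hfix
end

section
/- Let X be a nonnegative integrable random variable such that P(X > r) ~ c·r^{-q} as r → ∞, for some constants c > 0 and q > 1. Then E[X · 1_{X > r}] ~ c·(q/(q−1))·r^{1−q} as r → ∞. -/
/-!
Writing `G r = P(X > r)`, the identity `X·1_{X>r} = r·1_{X>r} + (X - r)⁺` and the layer cake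
formula for `(X - r)⁺` give `E[X·1_{X>r}] = r·G(r) + ∫_r^∞ G`. The first term is
`~ c·r^{1-q}`; integrating `G ~ c·t^{-q}` over `(r, ∞)` gives `∫_r^∞ G ~ c/(q-1)·r^{1-q}`,
and the two add up to `c·q/(q-1)·r^{1-q}`.
-/

open MeasureTheory Filter Asymptotics Set

namespace Asymptotics

theorem IsEquivalent.add_const_mul {α 𝕜 : Type*} [NormedField 𝕜] {l : Filter α}
    {u v h : α → 𝕜} {a b : 𝕜} (hu : u ~[l] fun x => a * h x) (hv : v ~[l] fun x => b * h x)
    (hab : a + b ≠ 0) : u + v ~[l] fun x => (a + b) * h x := by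
  have hu' : (fun x => u x - a * h x) =o[l] h :=
    hu.isLittleO.trans_isBigO (isBigO_const_mul_self a h l)
  have hv' : (fun x => v x - b * h x) =o[l] h :=
    hv.isLittleO.trans_isBigO (isBigO_const_mul_self b h l)
  refine ((hu'.add hv').trans_isBigO (isBigO_self_const_mul hab h l)).congr_left fun x => ?_
  simp only [Pi.sub_apply, Pi.add_apply]
  ring

theorem IsEquivalent.integral_Ioi {f g : ℝ → ℝ} (hfg : f ~[atTop] g) (hf : AEStronglyMeasurable f)
    (hg : ∀ᶠ t in atTop, 0 ≤ g t) {a : ℝ} (hg_int : IntegrableOn g (Ioi a)) :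
    (fun r => ∫ t in Ioi r, f t) ~[atTop] fun r => ∫ t in Ioi r, g t := by
  refine isLittleO_iff.2 fun ε hε => ?_
  obtain ⟨T, hT⟩ := eventually_atTop.1 (hg.and (hfg.isLittleO.bound hε))
  filter_upwards [eventually_ge_atTop (max T a)] with r hr
  have hTr : ∀ t ∈ Ioi r, 0 ≤ g t ∧ ‖f t - g t‖ ≤ ε * g t := fun t ht => by
    obtain ⟨hg0, hbd⟩ := hT t ((le_max_left _ _).trans (hr.trans (le_of_lt ht)))
    rw [Real.norm_of_nonneg hg0] at hbd
    exact ⟨hg0, hbd⟩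
  have hgr : IntegrableOn g (Ioi r) :=
    hg_int.mono_set (Ioi_subset_Ioi ((le_max_right _ _).trans hr))
  have hbound : ∀ᵐ t ∂volume.restrict (Ioi r), ‖f t - g t‖ ≤ ε * g t :=
    (ae_restrict_iff' measurableSet_Ioi).2 (Eventually.of_forall fun t ht => (hTr t ht).2)
  have hfgr : IntegrableOn (f - g) (Ioi r) :=
    (hgr.const_mul ε).mono' (hf.restrict.sub hgr.aestronglyMeasurable) hbound
  have hfr : IntegrableOn f (Ioi r) := by simpa using hfgr.add hgr
  have hg_nonneg : 0 ≤ ∫ t in Ioi r, g t :=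
    setIntegral_nonneg measurableSet_Ioi fun t ht => (hTr t ht).1
  calc ‖(∫ t in Ioi r, f t) - ∫ t in Ioi r, g t‖ = ‖∫ t in Ioi r, (f t - g t)‖ := by
        rw [integral_sub hfr hgr]
    _ ≤ ∫ t in Ioi r, ε * g t := norm_integral_le_of_norm_le (hgr.const_mul ε) hbound
    _ = ε * ‖∫ t in Ioi r, g t‖ := by rw [integral_const_mul, Real.norm_of_nonneg hg_nonneg]

end Asymptotics

section LayerCake

variable {Ω : Type*} [MeasurableSpace Ω] {μ : Measure Ω} [IsFiniteMeasure μ] {X : Ω → ℝ}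

theorem integral_max_sub_eq_integral_Ioi_meas_lt (hXi : Integrable X μ) (r : ℝ) :
    ∫ ω, max (X ω - r) 0 ∂μ = ∫ t in Ioi r, μ.real {ω | t < X ω} := by
  have hint : Integrable (fun ω => max (X ω - r) 0) μ := (hXi.sub (integrable_const r)).pos_part
  have hshift : ∫ t in Ioi r, μ.real {ω | t < X ω} = ∫ s in Ioi 0, μ.real {ω | s + r < X ω} := by
    rw [← (measurePreserving_add_right volume r).setIntegral_preimage_emb
      (measurableEmbedding_addRight r), preimage_add_const_Ioi, sub_self]
  rw [hshift, hint.integral_eq_integral_meas_lt (Eventually.of_forall fun ω => le_max_right _ _)]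
  refine setIntegral_congr_fun measurableSet_Ioi fun t (ht : 0 < t) => ?_
  simp only [lt_max_iff, not_lt_of_gt ht, or_false, lt_sub_iff_add_lt]

theorem setIntegral_lt_eq_mul_measureReal_add_integral_Ioi (hX : Measurable X)
    (hXi : Integrable X μ) (r : ℝ) :
    ∫ ω in {ω | r < X ω}, X ω ∂μ
      = r * μ.real {ω | r < X ω} + ∫ t in Ioi r, μ.real {ω | t < X ω} := by
  have hS : MeasurableSet {ω | r < X ω} := hX measurableSet_Ioi
  have hind : {ω | r < X ω}.indicator (fun ω => X ω - r) = fun ω => max (X ω - r) 0 := by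
    ext ω
    by_cases h : r < X ω
    · simp [h, le_of_lt h]
    · simp [h, not_lt.1 h]
  rw [← integral_max_sub_eq_integral_Ioi_meas_lt hXi, ← hind, integral_indicator hS,
    integral_sub hXi.integrableOn (integrableOn_const (measure_ne_top _ _)), setIntegral_const,
    smul_eq_mul, mul_comm]
  ring

end LayerCake

theorem stmt_4_general {Ω : Type*} [MeasurableSpace Ω] (P : Measure Ω) [IsProbabilityMeasure P]
    (X : Ω → ℝ) (hX : Measurable X) (hXint : Integrable X P)
    (c q : ℝ) (hc : 0 < c) (hq : 1 < q)
    (htail : (fun r : ℝ => (P {ω | r < X ω}).toReal) ~[atTop] fun r : ℝ => c * r ^ (-q)) :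
    (fun r : ℝ => ∫ ω in {ω | r < X ω}, X ω ∂P) ~[atTop]
      fun r : ℝ => c * (q / (q - 1)) * r ^ (1 - q) := by
  have hq1 : q - 1 ≠ 0 := by linarith
  set G : ℝ → ℝ := fun r => P.real {ω | r < X ω}
  have hG_anti : Antitone G := fun s t hst => measureReal_mono fun ω hω => hst.trans_lt hω
  have hrG : (fun r => r * G r) ~[atTop] fun r => c * r ^ (1 - q) := by
    refine (IsEquivalent.refl.mul htail).congr_right ?_
    filter_upwards [eventually_gt_atTop 0] with r hr
    simp only [Pi.mul_apply]
    rw [sub_eq_neg_add, Real.rpow_add_one hr.ne']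
    ring
  have hintG : (fun r => ∫ t in Ioi r, G t) ~[atTop] fun r => c / (q - 1) * r ^ (1 - q) := by
    refine (htail.integral_Ioi hG_anti.measurable.aestronglyMeasurable
      (eventually_gt_atTop 0 |>.mono fun t ht => by positivity)
      ((integrableOn_Ioi_rpow_of_lt (by linarith) one_pos).const_mul c)).congr_right ?_
    filter_upwards [eventually_gt_atTop 0] with r hr
    rw [integral_const_mul, integral_Ioi_rpow_of_lt (by linarith) hr, neg_add_eq_sub, neg_div,
      ← div_neg, neg_sub]
    ring
  have hlayer : (fun r => ∫ ω in {ω | r < X ω}, X ω ∂P)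
      = (fun r => r * G r) + fun r => ∫ t in Ioi r, G t :=
    funext (setIntegral_lt_eq_mul_measureReal_add_integral_Ioi hX hXint)
  have hsum : c * (q / (q - 1)) = c + c / (q - 1) := by
    field_simp
    ring
  rw [hlayer, hsum]
  exact hrG.add_const_mul hintG (by rw [← hsum]; positivity)

/-- If `X ≥ 0` is integrable with `P(X > r) ~ c·r^{-q}` as `r → ∞` for some
`c > 0`, `q > 1`, then `E[X·1_{X>r}] ~ c·(q/(q−1))·r^{1−q}` as `r → ∞`. -/
theorem stmt_4 {Ω : Type*} [MeasurableSpace Ω] (P : Measure Ω) [IsProbabilityMeasure P]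
    (X : Ω → ℝ) (hX : Measurable X) (hXnn : ∀ᵐ ω ∂P, 0 ≤ X ω) (hXint : Integrable X P)
    (c q : ℝ) (hc : 0 < c) (hq : 1 < q)
    (htail : (fun r : ℝ => (P {ω | r < X ω}).toReal) ~[atTop] fun r : ℝ => c * r ^ (-q)) :
    (fun r : ℝ => ∫ ω in {ω | r < X ω}, X ω ∂P) ~[atTop]
      fun r : ℝ => c * (q / (q - 1)) * r ^ (1 - q) :=
  stmt_4_general P X hX hXint c q hc hq htail
end

section
/- Let Y be a nonnegative random variable whose law has a continuous density g on (0,∞), and let b, c > 0. Assume that for every r > 0 and every ε > 0 one has P( e^{−εb}·r < Y ≤ r ) ≤ (e^{εc} − 1) · P(Y > r). Then b·r·g(r) ≤ c·P(Y > r) for every r > 0. -/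
/-!
Both sides of the hypothesis vanish at `ε = 0`. By the fundamental theorem of calculus
(continuity of `g` at `r`), the left side `∫ g` over `(e^{-εb} r, r]` has derivative `b r g(r)`
there, and the right side has derivative `c P(Y > r)`. A function dominated on the right by
another with the same value at a point has the smaller right derivative there.
-/

open MeasureTheory Filter Set Topology

theorem le_of_hasDerivWithinAt_Ioi_of_eventually_le {f φ : ℝ → ℝ} {f' φ' x : ℝ}
    (hf : HasDerivWithinAt f f' (Ioi x) x) (hφ : HasDerivWithinAt φ φ' (Ioi x) x)
    (hx : f x = φ x) (hle : ∀ᶠ y in 𝓝[>] x, f y ≤ φ y) : f' ≤ φ' := by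
  have hslope : Tendsto (slope (φ - f) x) (𝓝[>] x) (𝓝 (φ' - f')) :=
    (hasDerivWithinAt_iff_tendsto_slope' self_notMem_Ioi).1 (hφ.sub hf)
  have hslope_nonneg : ∀ᶠ y in 𝓝[>] x, 0 ≤ slope (φ - f) x y := by
    filter_upwards [hle, self_mem_nhdsWithin] with y hy hxy
    rw [slope_def_field, Pi.sub_apply, Pi.sub_apply, hx, sub_self, sub_zero]
    exact div_nonneg (sub_nonneg.2 hy) (sub_nonneg.2 (le_of_lt hxy))
  exact sub_nonneg.1 (ge_of_tendsto hslope hslope_nonneg)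

theorem hasDerivAt_intervalIntegral_exp_neg_mul_left {g : ℝ → ℝ} {r : ℝ}
    (hmeas : StronglyMeasurableAtFilter g (𝓝 r)) (hcont : ContinuousAt g r) (b : ℝ) :
    HasDerivAt (fun ε => ∫ x in Real.exp (-(ε * b)) * r..r, g x) (b * r * g r) 0 := by
  have hleft : HasDerivAt (fun u => ∫ x in u..r, g x) (-g r) r :=
    intervalIntegral.integral_hasDerivAt_left IntervalIntegrable.refl hmeas hcont
  have hendpoint : HasDerivAt (fun ε => Real.exp (-(ε * b)) * r) (-b * r) 0 := by
    simpa using ((((hasDerivAt_id (0 : ℝ)).mul_const b).fun_neg).exp).mul_const r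
  have hchain := hleft.comp_of_eq 0 hendpoint (by simp)
  rwa [show -g r * (-b * r) = b * r * g r by ring] at hchain

theorem measure_Ioc_eq_ofReal_intervalIntegral {Ω : Type*} [MeasurableSpace Ω] (P : Measure Ω)
    {Y : Ω → ℝ} (hY : Measurable Y) {g : ℝ → ℝ}
    (hg_dens : ∀ B : Set ℝ, MeasurableSet B →
      Measure.map Y P B = ENNReal.ofReal (∫ r in B ∩ Ioi 0, g r))
    {a r : ℝ} (ha : 0 ≤ a) (har : a ≤ r) :
    P {ω | a < Y ω ∧ Y ω ≤ r} = ENNReal.ofReal (∫ x in a..r, g x) := by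
  have hpos : Ioc a r ∩ Ioi 0 = Ioc a r :=
    inter_eq_self_of_subset_left fun x hx => ha.trans_lt hx.1
  change P (Y ⁻¹' Ioc a r) = _
  rw [← Measure.map_apply hY measurableSet_Ioc, hg_dens _ measurableSet_Ioc, hpos,
    intervalIntegral.integral_of_le har]

theorem stmt_5_general {Ω : Type*} [MeasurableSpace Ω] (P : Measure Ω) [IsProbabilityMeasure P]
    (Y : Ω → ℝ) (hY : Measurable Y)
    (g : ℝ → ℝ) (hg_meas : Measurable g)
    (hg_cont : ContinuousOn g (Set.Ioi 0))
    (hg_dens : ∀ B : Set ℝ, MeasurableSet B →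
      Measure.map Y P B = ENNReal.ofReal (∫ r in B ∩ Set.Ioi 0, g r))
    (b c : ℝ) (hb : 0 < b) (hc : 0 < c)
    (hineq : ∀ r > (0 : ℝ), ∀ ε > (0 : ℝ),
      P {ω | Real.exp (-(ε * b)) * r < Y ω ∧ Y ω ≤ r} ≤
        ENNReal.ofReal (Real.exp (ε * c) - 1) * P {ω | r < Y ω}) :
    ∀ r > (0 : ℝ), b * r * g r ≤ c * (P {ω | r < Y ω}).toReal := by
  intro r hr
  set T := (P {ω | r < Y ω}).toReal
  have hmass : HasDerivAt (fun ε => ∫ x in Real.exp (-(ε * b)) * r..r, g x) (b * r * g r) 0 :=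
    hasDerivAt_intervalIntegral_exp_neg_mul_left
      hg_meas.stronglyMeasurable.stronglyMeasurableAtFilter
      (hg_cont.continuousAt (Ioi_mem_nhds hr)) b
  have hbound : HasDerivAt (fun ε => (Real.exp (ε * c) - 1) * T) (c * T) 0 := by
    simpa using ((((hasDerivAt_id (0 : ℝ)).mul_const c).exp).sub_const 1).mul_const T
  refine le_of_hasDerivWithinAt_Ioi_of_eventually_le hmass.hasDerivWithinAt
    hbound.hasDerivWithinAt (by simp) ?_
  filter_upwards [self_mem_nhdsWithin] with ε (hε : 0 < ε)
  have hexp_le : Real.exp (-(ε * b)) * r ≤ r :=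
    mul_le_of_le_one_left hr.le (Real.exp_le_one_iff.2 (neg_nonpos.2 (mul_pos hε hb).le))
  have hexp_sub_one : 0 ≤ Real.exp (ε * c) - 1 := by
    linarith [Real.one_le_exp (mul_pos hε hc).le]
  have h := hineq r hr ε hε
  rwa [measure_Ioc_eq_ofReal_intervalIntegral P hY hg_dens (by positivity) hexp_le,
    ENNReal.ofReal_le_iff_le_toReal (ENNReal.mul_ne_top ENNReal.ofReal_ne_top (measure_ne_top _ _)),
    ENNReal.toReal_mul, ENNReal.toReal_ofReal hexp_sub_one] at h

/-- If `Y ≥ 0` has a continuous density `g` on `(0,∞)` and for all `r, ε > 0`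
one has `P(e^{−εb}·r < Y ≤ r) ≤ (e^{εc} − 1)·P(Y > r)`, then `b·r·g(r) ≤ c·P(Y > r)` for all
`r > 0`. -/
theorem stmt_5 {Ω : Type*} [MeasurableSpace Ω] (P : Measure Ω) [IsProbabilityMeasure P]
    (Y : Ω → ℝ) (hY : Measurable Y) (hYnn : ∀ᵐ ω ∂P, 0 ≤ Y ω)
    (g : ℝ → ℝ) (hg_meas : Measurable g) (hg_nn : ∀ r, 0 ≤ g r)
    (hg_cont : ContinuousOn g (Set.Ioi 0))
    (hg_dens : ∀ B : Set ℝ, MeasurableSet B →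
      Measure.map Y P B = ENNReal.ofReal (∫ r in B ∩ Set.Ioi 0, g r))
    (b c : ℝ) (hb : 0 < b) (hc : 0 < c)
    (hineq : ∀ r > (0 : ℝ), ∀ ε > (0 : ℝ),
      P {ω | Real.exp (-(ε * b)) * r < Y ω ∧ Y ω ≤ r} ≤
        ENNReal.ofReal (Real.exp (ε * c) - 1) * P {ω | r < Y ω}) :
    ∀ r > (0 : ℝ), b * r * g r ≤ c * (P {ω | r < Y ω}).toReal :=
  stmt_5_general P Y hY g hg_meas hg_cont hg_dens b c hb hc hineq
end

section
/- Let A be a nonnegative random variable whose law has a density a : (0,∞) → [0,∞) with respect to Lebesgue measure, and suppose there exist ρ > 0 and C > 0 with lim_{R→∞} R^ρ · P(A > R) = C. Then for all 0 < α < β and every continuous function ψ : [α,β] → ℝ, lim_{r→∞} r^ρ · ∫_{αr}^{βr} a(u) ψ(u/r) du = C·ρ · ∫_α^β z^{−ρ−1} ψ(z) dz. -/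
/-!
Substituting `u = z r` turns `r ^ ρ ∫_{αr}^{βr} a(u) ψ(u/r) du` into `∫_α^β F_r(z) ψ(z) dz` with
`F_r(z) = r ^ (ρ + 1) a(z r)`. The tail assumption gives, for `α ≤ x ≤ y ≤ β`,
`∫_x^y F_r = r ^ ρ (P(A > x r) - P(A > y r)) → C (x ^ (-ρ) - y ^ (-ρ)) = ∫_x^y C ρ z ^ (-ρ - 1) dz`.
Convergence of the masses of all subintervals upgrades to convergence against a continuous `ψ`:
on a fine partition `ψ` is uniformly within `δ` of its value at the left endpoint of each piece,
so both sides differ from the corresponding Riemann–Stieltjes sums by at most `δ` times a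
bounded total mass.
-/

open MeasureTheory Filter Set Topology

/-- Only integrable subsets are tested: on the others the Bochner integral is the junk value `0`. -/
theorem integrableOn_of_forall_setIntegral_le {X : Type*} [MeasurableSpace X] {μ : Measure X}
    [SigmaFinite μ] {f : X → ℝ} (hf : Measurable f) (hf_nonneg : ∀ x, 0 ≤ f x) {S : Set X}
    (hS : MeasurableSet S) (c : ℝ)
    (h : ∀ B ⊆ S, MeasurableSet B → IntegrableOn f B μ → ∫ x in B, f x ∂μ ≤ c) :
    IntegrableOn f S μ := by
  set B : ℕ → Set X := fun n => S ∩ spanningSets μ n ∩ f ⁻¹' Iic n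
  have hB_meas n : MeasurableSet (B n) :=
    (hS.inter (measurableSet_spanningSets μ n)).inter (hf measurableSet_Iic)
  have hB_int n : IntegrableOn f (B n) μ := by
    refine Measure.integrableOn_of_bounded (M := n) ?_ hf.aestronglyMeasurable
      ((ae_restrict_iff' (hB_meas n)).2 (ae_of_all _ fun x hx => ?_))
    · exact ((measure_mono (inter_subset_left.trans inter_subset_right)).trans_lt
        (measure_spanningSets_lt_top μ n)).ne
    · simpa [abs_of_nonneg (hf_nonneg x)] using hx.2
  have hB_mono : Monotone B := fun m n hmn =>
    inter_subset_inter (inter_subset_inter_right _ (monotone_spanningSets μ hmn))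
      (preimage_mono (Iic_subset_Iic.2 (by exact_mod_cast hmn)))
  have hB_union : ⋃ n, B n = S := by
    refine Subset.antisymm (iUnion_subset fun n => inter_subset_left.trans inter_subset_left)
      fun x hx => ?_
    obtain ⟨m, hm⟩ := mem_iUnion.1 (iUnion_spanningSets μ ▸ mem_univ x)
    obtain ⟨k, hk⟩ := exists_nat_ge (f x)
    exact mem_iUnion.2 ⟨max m k, ⟨hx, monotone_spanningSets μ (le_max_left m k) hm⟩,
      hk.trans (by exact_mod_cast le_max_right m k)⟩
  refine ⟨hf.aestronglyMeasurable, (hasFiniteIntegral_iff_ofReal (ae_of_all _ hf_nonneg)).2 ?_⟩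
  calc ∫⁻ x in S, ENNReal.ofReal (f x) ∂μ = ⨆ n, ∫⁻ x in B n, ENNReal.ofReal (f x) ∂μ := by
        rw [← hB_union, setLIntegral_iUnion_of_directed _ hB_mono.directed_le]
    _ ≤ ENNReal.ofReal c := iSup_le fun n => by
        rw [← ofReal_integral_eq_lintegral_ofReal (hB_int n) (ae_of_all _ hf_nonneg)]
        exact ENNReal.ofReal_le_ofReal
          (h _ (inter_subset_left.trans inter_subset_left) (hB_meas n) (hB_int n))
    _ < ⊤ := ENNReal.ofReal_lt_top

theorem tendsto_of_forall_approx {ι E : Type*} [PseudoMetricSpace E] {l : Filter ι}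
    {Φ : ι → E} {L : E}
    (h : ∀ ε > 0, ∃ (F : ι → E) (M : E), Tendsto F l (𝓝 M) ∧
      (∀ᶠ i in l, dist (Φ i) (F i) ≤ ε) ∧ dist M L ≤ ε) :
    Tendsto Φ l (𝓝 L) := by
  refine Metric.tendsto_nhds.2 fun ε hε => ?_
  obtain ⟨F, M, hF, hΦF, hML⟩ := h (ε / 3) (by positivity)
  filter_upwards [hΦF, Metric.tendsto_nhds.1 hF (ε / 3) (by positivity)] with i hΦ hM
  linarith [dist_triangle4 (Φ i) (F i) M L]

theorem ContinuousOn.exists_partition_abs_sub_le {ψ : ℝ → ℝ} {α β δ : ℝ} (hαβ : α ≤ β)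
    (hψ : ContinuousOn ψ (Icc α β)) (hδ : 0 < δ) :
    ∃ (n : ℕ) (x : ℕ → ℝ), Monotone x ∧ x 0 = α ∧ x n = β ∧
      ∀ k < n, ∀ z ∈ Icc (x k) (x (k + 1)), |ψ z - ψ (x k)| ≤ δ := by
  obtain ⟨η, hη, hψη⟩ :=
    Metric.uniformContinuousOn_iff.1 (isCompact_Icc.uniformContinuousOn_of_continuous hψ) δ hδ
  obtain ⟨n, hn⟩ := exists_nat_gt ((β - α) / η)
  have hn_pos : (0 : ℝ) < n := lt_of_le_of_lt (div_nonneg (sub_nonneg.2 hαβ) hη.le) hn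
  set h := (β - α) / n
  have hh : 0 ≤ h := div_nonneg (sub_nonneg.2 hαβ) hn_pos.le
  have hhη : h < η := (div_lt_iff₀ hn_pos).2 (by rwa [div_lt_iff₀ hη, mul_comm] at hn)
  refine ⟨n, fun k => α + k * h, fun j k hjk => ?_, by simp, ?_, fun k hk z hz => ?_⟩
  · have : (j : ℝ) ≤ k := by exact_mod_cast hjk
    dsimp only
    gcongr
  · simp only [h]; field_simp; ring
  · have hk' : ((k : ℝ) + 1) * h ≤ n * h :=
      mul_le_mul_of_nonneg_right (by exact_mod_cast hk) hh
    have hnh : n * h = β - α := by simp only [h]; field_simp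
    have hk0 : (0 : ℝ) ≤ k * h := mul_nonneg k.cast_nonneg hh
    push_cast at hz
    have hzx : dist z (α + k * h) < η := by
      rw [Real.dist_eq, abs_of_nonneg (by linarith [hz.1])]
      linarith [hz.2]
    simpa only [Real.dist_eq] using
      (hψη z ⟨by linarith [hz.1], by linarith [hz.2]⟩ _ ⟨by linarith, by nlinarith⟩ hzx).le

section RiemannSum

variable {f ψ : ℝ → ℝ}

theorem abs_intervalIntegral_mul_sub_le {x y c δ : ℝ} (hxy : x ≤ y)
    (hf : IntervalIntegrable f volume x y) (hψ : ContinuousOn ψ (Icc x y))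
    (hψc : ∀ z ∈ Icc x y, |ψ z - c| ≤ δ) :
    |(∫ z in x..y, f z * ψ z) - c * ∫ z in x..y, f z| ≤ δ * ∫ z in x..y, |f z| := by
  have hfψ : IntervalIntegrable (fun z => f z * ψ z) volume x y :=
    hf.mul_continuousOn (by rwa [uIcc_of_le hxy])
  rw [← intervalIntegral.integral_const_mul, ← intervalIntegral.integral_sub hfψ (hf.const_mul c),
    ← intervalIntegral.integral_const_mul]
  refine (intervalIntegral.abs_integral_le_integral_abs hxy).trans
    (intervalIntegral.integral_mono_on hxy (hfψ.sub (hf.const_mul c)).abs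
      (hf.abs.const_mul δ) fun z hz => ?_)
  calc |f z * ψ z - c * f z| = |f z| * |ψ z - c| := by rw [← abs_mul]; ring_nf
    _ ≤ |f z| * δ := mul_le_mul_of_nonneg_left (hψc z hz) (abs_nonneg _)
    _ = δ * |f z| := mul_comm _ _

theorem abs_intervalIntegral_mul_sub_sum_le {x : ℕ → ℝ} {n : ℕ} {δ : ℝ} (hx : Monotone x)
    (hf : IntervalIntegrable f volume (x 0) (x n)) (hψ : ContinuousOn ψ (Icc (x 0) (x n)))
    (hψx : ∀ k < n, ∀ z ∈ Icc (x k) (x (k + 1)), |ψ z - ψ (x k)| ≤ δ) :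
    |(∫ z in x 0..x n, f z * ψ z) - ∑ k ∈ Finset.range n, ψ (x k) * ∫ z in x k..x (k + 1), f z|
      ≤ δ * ∫ z in x 0..x n, |f z| := by
  have hsub : ∀ k < n, Icc (x k) (x (k + 1)) ⊆ Icc (x 0) (x n) := fun k hk =>
    Icc_subset_Icc (hx (Nat.zero_le k)) (hx hk)
  have hf_k : ∀ k < n, IntervalIntegrable f volume (x k) (x (k + 1)) := fun k hk =>
    hf.mono_set <| by
      rw [uIcc_of_le (hx (Nat.zero_le n)), uIcc_of_le (hx k.le_succ)]
      exact hsub k hk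
  rw [← intervalIntegral.sum_integral_adjacent_intervals fun k hk =>
      (hf_k k hk).mul_continuousOn (by rw [uIcc_of_le (hx k.le_succ)]; exact hψ.mono (hsub k hk)),
    ← intervalIntegral.sum_integral_adjacent_intervals fun k hk => (hf_k k hk).abs,
    ← Finset.sum_sub_distrib, Finset.mul_sum]
  exact (Finset.abs_sum_le_sum_abs _ _).trans (Finset.sum_le_sum fun k hk =>
    abs_intervalIntegral_mul_sub_le (hx k.le_succ) (hf_k k (Finset.mem_range.1 hk))
      (hψ.mono (hsub k (Finset.mem_range.1 hk))) (hψx k (Finset.mem_range.1 hk)))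

end RiemannSum

theorem tendsto_intervalIntegral_mul_of_tendsto_intervalIntegral {ι : Type*} {l : Filter ι}
    {F : ι → ℝ → ℝ} {g ψ : ℝ → ℝ} {α β : ℝ} (hαβ : α ≤ β)
    (hF_nonneg : ∀ᶠ i in l, ∀ z ∈ Icc α β, 0 ≤ F i z)
    (hF_int : ∀ᶠ i in l, IntervalIntegrable (F i) volume α β)
    (hg : IntervalIntegrable g volume α β)
    (hF_lim : ∀ x y, α ≤ x → x ≤ y → y ≤ β →
      Tendsto (fun i => ∫ z in x..y, F i z) l (𝓝 (∫ z in x..y, g z)))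
    (hψ : ContinuousOn ψ (Icc α β)) :
    Tendsto (fun i => ∫ z in α..β, F i z * ψ z) l (𝓝 (∫ z in α..β, g z * ψ z)) := by
  have hg_abs : 0 ≤ ∫ z in α..β, |g z| :=
    intervalIntegral.integral_nonneg hαβ fun z _ => abs_nonneg _
  set M := |∫ z in α..β, g z| + 1 + ∫ z in α..β, |g z|
  have hM : 0 < M := by positivity
  have hF_bound : ∀ᶠ i in l, ∫ z in α..β, F i z ≤ |∫ z in α..β, g z| + 1 :=
    (hF_lim α β le_rfl hαβ le_rfl).eventually
      (eventually_le_nhds (by linarith [le_abs_self (∫ z in α..β, g z)]))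
  refine tendsto_of_forall_approx fun ε hε => ?_
  obtain ⟨n, x, hx, rfl, rfl, hψx⟩ := hψ.exists_partition_abs_sub_le hαβ (div_pos hε hM)
  refine ⟨fun i => ∑ k ∈ Finset.range n, ψ (x k) * ∫ z in x k..x (k + 1), F i z,
    ∑ k ∈ Finset.range n, ψ (x k) * ∫ z in x k..x (k + 1), g z,
    tendsto_finsetSum _ fun k hk => (hF_lim _ _ (hx k.zero_le) (hx k.le_succ)
      (hx (Finset.mem_range.1 hk))).const_mul _, ?_, ?_⟩
  · filter_upwards [hF_nonneg, hF_int, hF_bound] with i hi_nonneg hi_int hi_bound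
    have hi_abs : ∫ z in x 0..x n, |F i z| = ∫ z in x 0..x n, F i z :=
      intervalIntegral.integral_congr fun z hz =>
        abs_of_nonneg (hi_nonneg z (by rwa [uIcc_of_le hαβ] at hz))
    rw [Real.dist_eq]
    calc _ ≤ ε / M * ∫ z in x 0..x n, |F i z| :=
          abs_intervalIntegral_mul_sub_sum_le hx hi_int hψ hψx
      _ ≤ ε / M * M := by
          rw [hi_abs]
          exact mul_le_mul_of_nonneg_left (by linarith) (by positivity)
      _ = ε := div_mul_cancel₀ ε hM.ne'
  · rw [dist_comm, Real.dist_eq]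
    calc _ ≤ ε / M * ∫ z in x 0..x n, |g z| := abs_intervalIntegral_mul_sub_sum_le hx hg hψ hψx
      _ ≤ ε / M * M := mul_le_mul_of_nonneg_left (by linarith [abs_nonneg (∫ z in x 0..x n, g z)])
          (by positivity)
      _ = ε := div_mul_cancel₀ ε hM.ne'

theorem integral_mul_rpow_neg_sub_one (ρ : ℝ) {x y : ℝ} (hx : 0 < x) (hy : 0 < y) :
    ∫ z in x..y, ρ * z ^ (-ρ - 1) = x ^ (-ρ) - y ^ (-ρ) := by
  have hpos : ∀ z ∈ uIcc x y, z ≠ 0 := fun z hz =>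
    (lt_of_lt_of_le (lt_min hx hy) hz.1).ne'
  have hcont : ContinuousOn (fun z => ρ * z ^ (-ρ - 1)) (uIcc x y) :=
    continuousOn_const.mul (continuousOn_id.rpow_const fun z hz => Or.inl (hpos z hz))
  rw [intervalIntegral.integral_eq_sub_of_hasDerivAt (f := fun z => -z ^ (-ρ))
    (fun z hz => by
      simpa using (Real.hasDerivAt_rpow_const (p := -ρ) (Or.inl (hpos z hz))).fun_neg)
    hcont.intervalIntegrable]
  ring

theorem tendsto_rpow_mul_comp_const_mul {ρ C : ℝ} {T : ℝ → ℝ}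
    (hT : Tendsto (fun R => R ^ ρ * T R) atTop (𝓝 C)) {s : ℝ} (hs : 0 < s) :
    Tendsto (fun r => r ^ ρ * T (s * r)) atTop (𝓝 (C * s ^ (-ρ))) := by
  rw [mul_comm]
  refine ((hT.comp (tendsto_id.const_mul_atTop hs)).const_mul (s ^ (-ρ))).congr' ?_
  filter_upwards [eventually_gt_atTop 0] with r hr
  rw [Function.comp_apply, id, Real.mul_rpow hs.le hr.le, ← mul_assoc, ← mul_assoc,
    ← Real.rpow_add hs, neg_add_cancel, Real.rpow_zero, one_mul]

theorem integrableOn_Ioi_of_measure_eq {ν : Measure ℝ} {a : ℝ → ℝ} (ha_meas : Measurable a)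
    (ha_nn : ∀ u, 0 ≤ a u)
    (ha_dens : ∀ B : Set ℝ, MeasurableSet B → ν B = ENNReal.ofReal (∫ u in B ∩ Ioi 0, a u)) :
    IntegrableOn a (Ioi 0) := by
  have hν : ∀ B ⊆ Ioi 0, MeasurableSet B → ν B = ENNReal.ofReal (∫ u in B, a u) :=
    fun B hB hBm => by rw [ha_dens B hBm, inter_eq_left.2 hB]
  -- `ν (Ioi 0)` is finite, being an `ENNReal.ofReal`.
  refine integrableOn_of_forall_setIntegral_le ha_meas ha_nn measurableSet_Ioi (ν (Ioi 0)).toReal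
    fun B hB hBm _ => ?_
  rw [← ENNReal.toReal_ofReal (setIntegral_nonneg hBm fun u _ => ha_nn u), ← hν B hB hBm]
  exact ENNReal.toReal_mono (by rw [hν _ subset_rfl measurableSet_Ioi]; exact ENNReal.ofReal_ne_top)
    (measure_mono hB)

theorem toReal_measure_lt_eq_setIntegral_Ioi {Ω : Type*} [MeasurableSpace Ω] {P : Measure Ω}
    {A : Ω → ℝ} (hA : Measurable A) {a : ℝ → ℝ} (ha_nn : ∀ u, 0 ≤ a u)
    (ha_dens : ∀ B : Set ℝ, MeasurableSet B →
      Measure.map A P B = ENNReal.ofReal (∫ u in B ∩ Ioi 0, a u))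
    {R : ℝ} (hR : 0 < R) :
    (P {ω | R < A ω}).toReal = ∫ u in Ioi R, a u := by
  have h := ha_dens (Ioi R) measurableSet_Ioi
  rw [Measure.map_apply hA measurableSet_Ioi, inter_eq_left.2 (Ioi_subset_Ioi hR.le)] at h
  change (P (A ⁻¹' Ioi R)).toReal = _
  rw [h, ENNReal.toReal_ofReal (setIntegral_nonneg measurableSet_Ioi fun u _ => ha_nn u)]

/-- The density of the image of `r ^ ρ * a u du` under `u ↦ u / r`. -/
noncomputable def rescaledDensity (a : ℝ → ℝ) (ρ r z : ℝ) : ℝ := r ^ ρ * r * a (z * r)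

section RescaledDensity

variable {a : ℝ → ℝ} {ρ : ℝ}

theorem intervalIntegral_rescaledDensity_mul {r : ℝ} (hr : r ≠ 0) (ψ : ℝ → ℝ) (x y : ℝ) :
    ∫ z in x..y, rescaledDensity a ρ r z * ψ z = r ^ ρ * ∫ u in x * r..y * r, a u * ψ (u / r) := by
  have h : ∀ z, rescaledDensity a ρ r z * ψ z = r ^ ρ * r * (a (z * r) * ψ (z * r / r)) :=
    fun z => by rw [rescaledDensity, mul_div_cancel_right₀ _ hr]; ring
  simp_rw [h]
  rw [intervalIntegral.integral_const_mul,
    intervalIntegral.integral_comp_mul_right (fun u => a u * ψ (u / r)) hr, smul_eq_mul]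
  field_simp

theorem intervalIntegrable_rescaledDensity (ha : IntegrableOn a (Ioi 0)) {r x y : ℝ}
    (hr : 0 < r) (hx : 0 < x) (hy : 0 < y) :
    IntervalIntegrable (rescaledDensity a ρ r) volume x y := by
  have hsub : uIcc (x * r) (y * r) ⊆ Ioi 0 := fun u hu =>
    lt_of_lt_of_le (lt_min (mul_pos hx hr) (mul_pos hy hr)) hu.1
  have := ((ha.mono_set hsub).intervalIntegrable).comp_mul_right (c := r)
  rw [mul_div_cancel_right₀ _ hr.ne', mul_div_cancel_right₀ _ hr.ne'] at this
  exact this.const_mul (r ^ ρ * r)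

theorem tendsto_intervalIntegral_rescaledDensity {C : ℝ} (ha : IntegrableOn a (Ioi 0))
    (hT : Tendsto (fun R => R ^ ρ * ∫ u in Ioi R, a u) atTop (𝓝 C)) {x y : ℝ} (hx : 0 < x)
    (hxy : x ≤ y) :
    Tendsto (fun r => ∫ z in x..y, rescaledDensity a ρ r z) atTop
      (𝓝 (∫ z in x..y, C * ρ * z ^ (-ρ - 1))) := by
  have hy := hx.trans_le hxy
  simp_rw [mul_assoc C]
  rw [intervalIntegral.integral_const_mul, integral_mul_rpow_neg_sub_one ρ hx hy, mul_sub]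
  refine ((tendsto_rpow_mul_comp_const_mul hT hx).sub
    (tendsto_rpow_mul_comp_const_mul hT hy)).congr' ?_
  filter_upwards [eventually_gt_atTop 0] with r hr
  have h := intervalIntegral_rescaledDensity_mul (a := a) (ρ := ρ) hr.ne' (fun _ => 1) x y
  simp only [mul_one] at h
  rw [h, ← mul_sub, intervalIntegral.integral_Ioi_sub_Ioi
    (ha.mono_set (Ioi_subset_Ioi (mul_pos hx hr).le)) (mul_le_mul_of_nonneg_right hxy hr.le)]

end RescaledDensity

theorem stmt_8_general {Ω : Type*} [MeasurableSpace Ω] (P : Measure Ω)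
    (A : Ω → ℝ) (hA : Measurable A)
    (a : ℝ → ℝ) (ha_meas : Measurable a) (ha_nn : ∀ u, 0 ≤ a u)
    (ha_dens : ∀ B : Set ℝ, MeasurableSet B →
      Measure.map A P B = ENNReal.ofReal (∫ u in B ∩ Set.Ioi 0, a u))
    (ρ C : ℝ)
    (htail : Tendsto (fun R : ℝ => R ^ ρ * (P {ω | R < A ω}).toReal) atTop (nhds C)) :
    ∀ α β : ℝ, 0 < α → α < β → ∀ ψ : ℝ → ℝ, ContinuousOn ψ (Set.Icc α β) →
      Tendsto (fun r : ℝ => r ^ ρ * ∫ u in (α * r)..(β * r), a u * ψ (u / r)) atTop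
        (nhds (C * ρ * ∫ z in α..β, z ^ (-ρ - 1) * ψ z)) := by
  intro α β hα hαβ ψ hψ
  have ha : IntegrableOn a (Ioi 0) := integrableOn_Ioi_of_measure_eq ha_meas ha_nn ha_dens
  have hT : Tendsto (fun R => R ^ ρ * ∫ u in Ioi R, a u) atTop (𝓝 C) := htail.congr' <| by
    filter_upwards [eventually_gt_atTop 0] with R hR
    rw [toReal_measure_lt_eq_setIntegral_Ioi hA ha_nn ha_dens hR]
  have hβ := hα.trans hαβ
  have hlim := tendsto_intervalIntegral_mul_of_tendsto_intervalIntegral hαβ.le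
    (F := rescaledDensity a ρ) (g := fun z => C * ρ * z ^ (-ρ - 1))
    (eventually_gt_atTop 0 |>.mono fun r hr z hz => by
      unfold rescaledDensity; have := ha_nn (z * r); positivity)
    (eventually_gt_atTop 0 |>.mono fun r hr => intervalIntegrable_rescaledDensity ha hr hα hβ)
    (continuousOn_const.mul (continuousOn_id.rpow_const fun z hz =>
      Or.inl (hα.trans_le (uIcc_of_le hαβ.le ▸ hz).1).ne')).intervalIntegrable
    (fun x y hx hxy _ => tendsto_intervalIntegral_rescaledDensity ha hT (hα.trans_le hx) hxy) hψ
  simp_rw [mul_assoc (C * ρ)] at hlim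
  rw [← intervalIntegral.integral_const_mul]
  refine hlim.congr' ?_
  filter_upwards [eventually_gt_atTop 0] with r hr
  exact intervalIntegral_rescaledDensity_mul hr.ne' ψ α β

/-- If `A ≥ 0` has a density `a` on `(0,∞)` and `R^ρ·P(A > R) → C > 0`, then
for all `0 < α < β` and every continuous `ψ` on `[α,β]`,
`r^ρ ∫_{αr}^{βr} a(u) ψ(u/r) du → C·ρ·∫_α^β z^{−ρ−1} ψ(z) dz` as `r → ∞`. -/
theorem stmt_8 {Ω : Type*} [MeasurableSpace Ω] (P : Measure Ω) [IsProbabilityMeasure P]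
    (A : Ω → ℝ) (hA : Measurable A) (hAnn : ∀ᵐ ω ∂P, 0 ≤ A ω)
    (a : ℝ → ℝ) (ha_meas : Measurable a) (ha_nn : ∀ u, 0 ≤ a u)
    (ha_dens : ∀ B : Set ℝ, MeasurableSet B →
      Measure.map A P B = ENNReal.ofReal (∫ u in B ∩ Set.Ioi 0, a u))
    (ρ C : ℝ) (hρ : 0 < ρ) (hC : 0 < C)
    (htail : Tendsto (fun R : ℝ => R ^ ρ * (P {ω | R < A ω}).toReal) atTop (nhds C)) :
    ∀ α β : ℝ, 0 < α → α < β → ∀ ψ : ℝ → ℝ, ContinuousOn ψ (Set.Icc α β) →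
      Tendsto (fun r : ℝ => r ^ ρ * ∫ u in (α * r)..(β * r), a u * ψ (u / r)) atTop
        (nhds (C * ρ * ∫ z in α..β, z ^ (-ρ - 1) * ψ z)) :=
  stmt_8_general P A hA a ha_meas ha_nn ha_dens ρ C htail
end

section
/- Let X and Y be independent nonnegative random variables, with X integrable and the law of Y having a density g : [0,∞) → [0,∞) with respect to Lebesgue measure. Then for every R > 0: P( Y ≤ 2R and X > 2R − Y ) ≤ P(X > R) + ( sup_{s ≥ R} g(s) ) · E[X]. -/
/-!
Outside `{X > R}` the event forces `R < Y ≤ 2R`, leaving `{R < Y ≤ 2R, X > 2R - Y}`. By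
independence its probability is `∫_{(R, 2R]} P(X > 2R - y) dP_Y(y)`. On `(R, 2R]` the law of `Y`
is dominated by `(sup_{s ≥ R} g) · Lebesgue`, and after the substitution `t = 2R - y` the
remaining integral is at most `∫_0^∞ P(X > t) dt = E[X]` by the layer cake formula.
-/

open MeasureTheory ProbabilityTheory Set
open scoped ENNReal

theorem restrict_le_smul_volume_of_density {ν : Measure ℝ} {g : ℝ → ℝ} (hg_nn : ∀ y, 0 ≤ g y)
    (hν : ∀ B : Set ℝ, MeasurableSet B → ν B = ENNReal.ofReal (∫ y in B ∩ Ici 0, g y))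
    {s : Set ℝ} (hs : MeasurableSet s) {M : ℝ≥0∞} (hM : ∀ y ∈ s, ENNReal.ofReal (g y) ≤ M) :
    ν.restrict s ≤ M • volume.restrict s := by
  refine Measure.le_iff.2 fun B hB => ?_
  rw [Measure.restrict_apply hB, Measure.smul_apply, Measure.restrict_apply hB, smul_eq_mul,
    hν _ (hB.inter hs)]
  set S := B ∩ s ∩ Ici 0
  have hg_le : ∫⁻ y in S, ENNReal.ofReal (g y) ≤ ∫⁻ _ in S, M :=
    setLIntegral_mono measurable_const fun y hy => hM y hy.1.2
  calc ENNReal.ofReal (∫ y in S, g y)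
      ≤ ∫⁻ y in S, ENNReal.ofReal (g y) := by
        by_cases hint : Integrable g (volume.restrict S)
        · exact (ofReal_integral_eq_lintegral_ofReal hint (.of_forall hg_nn)).le
        · simp [integral_undef hint]
    _ ≤ M * volume S := hg_le.trans_eq (setLIntegral_const _ _)
    _ ≤ M * volume (B ∩ s) := by gcongr; exact inter_subset_left

theorem ProbabilityTheory.IndepFun.measure_mem_and_sub_lt_eq_lintegral {Ω : Type*}
    [MeasurableSpace Ω] {P : Measure Ω} [IsFiniteMeasure P] {X Y : Ω → ℝ}
    (hX : Measurable X) (hY : Measurable Y)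
    (hindep : IndepFun X Y P) {s : Set ℝ} (hs : MeasurableSet s) (c : ℝ) :
    P {ω | Y ω ∈ s ∧ c - Y ω < X ω} = ∫⁻ y in s, P {ω | c - y < X ω} ∂(P.map Y) := by
  set S : Set (ℝ × ℝ) := {p | p.1 ∈ s ∧ c - p.1 < p.2}
  have hS : MeasurableSet S := (measurable_fst hs).inter <|
    measurableSet_lt (measurable_const.sub measurable_fst) measurable_snd
  have hmap : P.map (fun ω => (Y ω, X ω)) = (P.map Y).prod (P.map X) :=
    (indepFun_iff_map_prod_eq_prod_map_map hY.aemeasurable hX.aemeasurable).1 hindep.symm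
  have hslice : ∀ y,
      P.map X (Prod.mk y ⁻¹' S) = s.indicator (fun y => P {ω | c - y < X ω}) y := by
    intro y
    by_cases hy : y ∈ s
    · have hsec : Prod.mk y ⁻¹' S = Ioi (c - y) := by ext; simp [S, hy]
      rw [indicator_of_mem hy, hsec, Measure.map_apply hX measurableSet_Ioi]
      rfl
    · simp [S, hy]
  calc P {ω | Y ω ∈ s ∧ c - Y ω < X ω} = P.map (fun ω => (Y ω, X ω)) S :=
        (Measure.map_apply (hY.prodMk hX) hS).symm
    _ = _ := by
      rw [hmap, Measure.prod_apply hS]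
      simp_rw [hslice]
      exact lintegral_indicator hs _

theorem setLIntegral_Iic_measure_sub_lt_eq_ofReal_integral {Ω : Type*} [MeasurableSpace Ω]
    {P : Measure Ω} {X : Ω → ℝ} (hXnn : 0 ≤ᵐ[P] X) (hXint : Integrable X P) (c : ℝ) :
    ∫⁻ y in Iic c, P {ω | c - y < X ω} = ENNReal.ofReal (∫ ω, X ω ∂P) := by
  have hpre : (fun y : ℝ => c - y) ⁻¹' Ici 0 = Iic c := by ext; simp
  rw [← hpre, (Measure.measurePreserving_sub_left volume c).setLIntegral_comp_preimage_emb
      (MeasurableEquiv.subLeft c).measurableEmbedding (fun t => P {ω | t < X ω}),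
    setLIntegral_congr Ioi_ae_eq_Ici.symm, ← lintegral_eq_lintegral_meas_lt P hXnn
      hXint.aemeasurable, ofReal_integral_eq_lintegral_ofReal hXint hXnn]

theorem stmt_11_general {Ω : Type*} [MeasurableSpace Ω] (P : Measure Ω) [IsProbabilityMeasure P]
    (X Y : Ω → ℝ) (hX : Measurable X) (hY : Measurable Y)
    (hindep : IndepFun X Y P)
    (hXnn : ∀ᵐ ω ∂P, 0 ≤ X ω)
    (hXint : Integrable X P)
    (g : ℝ → ℝ) (hg_nn : ∀ y, 0 ≤ g y)
    (hg_dens : ∀ B : Set ℝ, MeasurableSet B →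
      Measure.map Y P B = ENNReal.ofReal (∫ y in B ∩ Set.Ici 0, g y)) :
    ∀ R > (0 : ℝ),
      P {ω | Y ω ≤ 2 * R ∧ 2 * R - Y ω < X ω} ≤
        P {ω | R < X ω} +
          (⨆ s ∈ Set.Ici R, ENNReal.ofReal (g s)) * ENNReal.ofReal (∫ ω, X ω ∂P) := by
  intro R _
  set M := ⨆ s ∈ Ici R, ENNReal.ofReal (g s)
  have hsplit : {ω | Y ω ≤ 2 * R ∧ 2 * R - Y ω < X ω} ⊆
      {ω | R < X ω} ∪ {ω | Y ω ∈ Ioc R (2 * R) ∧ 2 * R - Y ω < X ω} := by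
    rintro ω ⟨hY2R, hlt⟩
    by_cases hXR : R < X ω
    · exact Or.inl hXR
    · exact Or.inr ⟨⟨by linarith, hY2R⟩, hlt⟩
  have hdens_le : (P.map Y).restrict (Ioc R (2 * R)) ≤ M • volume.restrict (Ioc R (2 * R)) :=
    restrict_le_smul_volume_of_density hg_nn hg_dens measurableSet_Ioc
      fun y hy => le_iSup₂_of_le y hy.1.le le_rfl
  refine (measure_mono hsplit).trans <| (measure_union_le _ _).trans <| add_le_add_right ?_ _
  calc P {ω | Y ω ∈ Ioc R (2 * R) ∧ 2 * R - Y ω < X ω}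
      = ∫⁻ y in Ioc R (2 * R), P {ω | 2 * R - y < X ω} ∂(P.map Y) :=
        hindep.measure_mem_and_sub_lt_eq_lintegral hX hY measurableSet_Ioc _
    _ ≤ M * ∫⁻ y in Ioc R (2 * R), P {ω | 2 * R - y < X ω} :=
        (lintegral_mono' hdens_le le_rfl).trans_eq (lintegral_smul_measure _ _)
    _ ≤ M * ∫⁻ y in Iic (2 * R), P {ω | 2 * R - y < X ω} := by
        gcongr; exact Ioc_subset_Iic_self
    _ = M * ENNReal.ofReal (∫ ω, X ω ∂P) := by
        rw [setLIntegral_Iic_measure_sub_lt_eq_ofReal_integral hXnn hXint]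

/-- For independent nonnegative random variables `X, Y` with `X` integrable
and `Y` having a density `g` on `[0,∞)`, for every `R > 0`:
`P(Y ≤ 2R and X > 2R − Y) ≤ P(X > R) + (sup_{s ≥ R} g(s))·E[X]`. -/
theorem stmt_11 {Ω : Type*} [MeasurableSpace Ω] (P : Measure Ω) [IsProbabilityMeasure P]
    (X Y : Ω → ℝ) (hX : Measurable X) (hY : Measurable Y)
    (hindep : IndepFun X Y P)
    (hXnn : ∀ᵐ ω ∂P, 0 ≤ X ω) (hYnn : ∀ᵐ ω ∂P, 0 ≤ Y ω)
    (hXint : Integrable X P)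
    (g : ℝ → ℝ) (hg_meas : Measurable g) (hg_nn : ∀ y, 0 ≤ g y)
    (hg_dens : ∀ B : Set ℝ, MeasurableSet B →
      Measure.map Y P B = ENNReal.ofReal (∫ y in B ∩ Set.Ici 0, g y)) :
    ∀ R > (0 : ℝ),
      P {ω | Y ω ≤ 2 * R ∧ 2 * R - Y ω < X ω} ≤
        P {ω | R < X ω} +
          (⨆ s ∈ Set.Ici R, ENNReal.ofReal (g s)) * ENNReal.ofReal (∫ ω, X ω ∂P) :=
  stmt_11_general P X Y hX hY hindep hXnn hXint g hg_nn hg_dens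
end

section
/- Let (A_i)_{i≥1} be a sequence of independent, identically distributed nonnegative random variables whose common law has a bounded continuous density a : (0,∞) → [0,∞) satisfying lim_{r→∞} r^{1+q} a(r) = K for some constants q > 0 and K > 0. Let m ≥ 1 and let w_1, …, w_m ≥ 0 be not all zero. Then the sum S = Σ_{j=1}^m w_j A_j has a continuous density a_w on (0,∞), and lim_{r→∞} r^{1+q} a_w(r) = K · Σ_{j=1}^m w_j^q (with the convention 0^q = 0). -/
/-!
The law of `w A` with `w > 0` has density `w⁻¹ a (r / w)`, whose tail constant is `w ^ q K`, and
the law of a sum of independent variables with densities has the convolution as density. So it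
suffices that tail constants add under convolution: split `(f ⋆ g)(r)` at `y = r / 2`. On
`{y < r / 2}` one has `r - y > r / 2`, so `r ^ (1 + q) g (r - y)` is bounded and tends to `K_g`,
and dominated convergence gives `K_g ∫ f = K_g`; the other half gives `K_f` symmetrically. Zero
weights drop out of both sides, and induction over the positive weights finishes the proof.
-/

open MeasureTheory ProbabilityTheory Filter Set Topology
open scoped Convolution

section Convolution

variable {f g : ℝ → ℝ}

lemma convolutionExists_of_bdd {C : ℝ} (hf : Integrable f) (hg : Measurable g)
    (hg_bdd : ∀ x, |g x| ≤ C) : ConvolutionExists f g (ContinuousLinearMap.lsmul ℝ ℝ) :=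
  fun r => hf.mul_bdd (hg.comp (measurable_const.sub measurable_id)).aestronglyMeasurable
    (ae_of_all _ fun y => hg_bdd (r - y))

lemma continuous_convolution_of_continuousOn_compl_singleton {C a : ℝ} (hf : Integrable f)
    (hg : Measurable g) (hg_bdd : ∀ x, |g x| ≤ C) (hg_cont : ContinuousOn g {a}ᶜ) :
    Continuous (f ⋆ g) := by
  refine continuous_iff_continuousAt.2 fun r₀ => ?_
  show ContinuousAt (fun r => ∫ y, f y * g (r - y)) r₀
  have hae : ∀ᵐ y : ℝ, y ≠ r₀ - a := by
    simp [ae_iff, measure_singleton]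
  refine continuousAt_of_dominated (bound := fun y => |f y| * C)
    (Eventually.of_forall fun r => hf.aestronglyMeasurable.mul
      (hg.comp (measurable_const.sub measurable_id)).aestronglyMeasurable)
    (Eventually.of_forall fun r => ae_of_all _ fun y => ?_) (hf.abs.mul_const C) ?_
  · rw [Real.norm_eq_abs, abs_mul]
    exact mul_le_mul_of_nonneg_left (hg_bdd _) (abs_nonneg _)
  · filter_upwards [hae] with y hy
    have hcont : ContinuousAt g (r₀ - y) :=
      hg_cont.continuousAt (isOpen_compl_singleton.mem_nhds fun h => hy (by
        simp only [mem_singleton_iff] at h; linarith))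
    exact continuousAt_const.mul
      (hcont.comp (continuousAt_id.sub continuousAt_const) (x := r₀))

lemma Filter.Tendsto.rpow_mul_comp_sub {p L : ℝ}
    (hg_tail : Tendsto (fun r => r ^ p * g r) atTop (𝓝 L)) (y : ℝ) :
    Tendsto (fun r => r ^ p * g (r - y)) atTop (𝓝 L) := by
  have h_shift : Tendsto (fun r => r - y) atTop atTop :=
    tendsto_atTop_add_const_right _ _ tendsto_id
  have h_ratio : Tendsto (fun r => r / (r - y)) atTop (𝓝 1) := by
    have := (tendsto_const_nhds (x := (1 : ℝ))).add
      ((tendsto_const_nhds (x := y)).div_atTop h_shift)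
    rw [add_zero] at this
    refine this.congr' ?_
    filter_upwards [eventually_gt_atTop y] with r hr
    field_simp [(sub_pos.2 hr).ne']
    ring
  have := (h_ratio.rpow_const (p := p) (Or.inl one_ne_zero)).mul (hg_tail.comp h_shift)
  rw [Real.one_rpow, one_mul] at this
  refine this.congr' ?_
  filter_upwards [eventually_gt_atTop (max y 0)] with r hr
  have hry : 0 < r - y := by linarith [le_max_left y 0]
  rw [Function.comp_apply, Real.div_rpow (by linarith [le_max_right y 0]) hry.le]
  field_simp [(Real.rpow_pos_of_pos hry p).ne']

lemma tendsto_rpow_mul_setIntegral_Iio_half {p L : ℝ} (hp : 0 ≤ p) (hf : Integrable f)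
    (hg : Measurable g) (hg_tail : Tendsto (fun r => r ^ p * g r) atTop (𝓝 L)) :
    Tendsto (fun r => r ^ p * ∫ y in Iio (r / 2), f y * g (r - y)) atTop
      (𝓝 (L * ∫ y, f y)) := by
  obtain ⟨R, hR_pos, hR⟩ : ∃ R > 0, ∀ s ≥ R, |s ^ p * g s| ≤ |L| + 1 := by
    obtain ⟨R, hR⟩ := eventually_atTop.1 (hg_tail.abs.eventually (eventually_le_nhds
      (lt_add_one |L|)))
    exact ⟨max R 1, by positivity, fun s hs => hR s (le_of_max_le_left hs)⟩
  have h_eq : ∀ r, r ^ p * ∫ y in Iio (r / 2), f y * g (r - y)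
      = ∫ y, (Iio (r / 2)).indicator (fun y => f y * (r ^ p * g (r - y))) y := fun r => by
    rw [integral_indicator measurableSet_Iio, ← integral_const_mul]
    simp_rw [mul_left_comm]
  simp_rw [h_eq, ← integral_const_mul, mul_comm L]
  refine tendsto_integral_filter_of_dominated_convergence (fun y => 2 ^ p * (|L| + 1) * |f y|)
    (Eventually.of_forall fun r => ?_) ?_ (hf.abs.const_mul _) (ae_of_all _ fun y => ?_)
  · exact (hf.aestronglyMeasurable.mul ((hg.comp (measurable_const.sub measurable_id)
      ).aestronglyMeasurable.const_mul _)).indicator measurableSet_Iio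
  · filter_upwards [eventually_ge_atTop (2 * R)] with r hr
    refine ae_of_all _ fun y => ?_
    by_cases hy : y ∈ Iio (r / 2)
    · rw [indicator_of_mem hy]
      have hs : r / 2 ≤ r - y := by linarith [mem_Iio.1 hy]
      have hr_pos : 0 < r := by linarith
      calc ‖f y * (r ^ p * g (r - y))‖
          = r ^ p * |f y| * |g (r - y)| := by
            rw [Real.norm_eq_abs, abs_mul, abs_mul, abs_of_nonneg (Real.rpow_nonneg hr_pos.le p)]
            ring
        _ ≤ (2 ^ p * (r - y) ^ p) * |f y| * |g (r - y)| := by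
            gcongr
            rw [← Real.mul_rpow zero_le_two (by linarith)]
            exact Real.rpow_le_rpow hr_pos.le (by linarith) hp
        _ = 2 ^ p * |f y| * |(r - y) ^ p * g (r - y)| := by
            rw [abs_mul, abs_of_nonneg (Real.rpow_nonneg (by linarith) p)]; ring
        _ ≤ 2 ^ p * |f y| * (|L| + 1) := by gcongr; exact hR _ (by linarith)
        _ = 2 ^ p * (|L| + 1) * |f y| := by ring
    · rw [indicator_of_notMem hy, norm_zero]
      positivity
  · refine (tendsto_const_nhds.mul (hg_tail.rpow_mul_comp_sub y)).congr' ?_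
    filter_upwards [eventually_gt_atTop (2 * y)] with r hr
    rw [indicator_of_mem (mem_Iio.2 (by linarith))]

lemma setIntegral_Ioi_half_mul_sub (f g : ℝ → ℝ) (r : ℝ) :
    ∫ y in Ioi (r / 2), f y * g (r - y) = ∫ x in Iio (r / 2), g x * f (r - x) := by
  rw [← integral_indicator measurableSet_Ioi, ← integral_indicator measurableSet_Iio,
    ← integral_sub_left_eq_self _ volume r]
  congr 1 with x
  by_cases hx : x < r / 2
  · rw [indicator_of_mem (by simp only [mem_Ioi]; linarith), indicator_of_mem (mem_Iio.2 hx),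
      sub_sub_cancel, mul_comm]
  · rw [indicator_of_notMem (by simp only [mem_Ioi]; linarith),
      indicator_of_notMem (mt mem_Iio.1 hx)]

lemma tendsto_rpow_mul_convolution {p Kf Kg : ℝ} (hp : 0 ≤ p) (hf : Integrable f)
    (hg : Integrable g) (hf_meas : Measurable f) (hg_meas : Measurable g)
    (hfg : ConvolutionExists f g (ContinuousLinearMap.lsmul ℝ ℝ))
    (hf_tail : Tendsto (fun r => r ^ p * f r) atTop (𝓝 Kf))
    (hg_tail : Tendsto (fun r => r ^ p * g r) atTop (𝓝 Kg)) :
    Tendsto (fun r => r ^ p * (f ⋆ g) r) atTop (𝓝 (Kg * (∫ x, f x) + Kf * ∫ x, g x)) := by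
  refine ((tendsto_rpow_mul_setIntegral_Iio_half hp hf hg_meas hg_tail).add
    (tendsto_rpow_mul_setIntegral_Iio_half hp hg hf_meas hf_tail)).congr fun r => ?_
  rw [← setIntegral_Ioi_half_mul_sub f g r, ← mul_add, setIntegral_congr_set Iio_ae_eq_Iic,
    ← compl_Iic, integral_add_compl (f := fun y => f y * g (r - y)) measurableSet_Iic (hfg r)]
  rfl

lemma convolution_nonneg (hf : ∀ x, 0 ≤ f x) (hg : ∀ x, 0 ≤ g x) (r : ℝ) : 0 ≤ (f ⋆ g) r :=
  integral_nonneg fun y => mul_nonneg (hf y) (hg _)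

lemma convolution_eq_zero_of_nonpos (hf : ∀ x ≤ 0, f x = 0) (hg : ∀ x ≤ 0, g x = 0) {r : ℝ}
    (hr : r ≤ 0) : (f ⋆ g) r = 0 := by
  refine integral_eq_zero_of_ae (ae_of_all _ fun y => ?_)
  rcases le_or_gt y 0 with hy | hy
  · exact mul_eq_zero_of_left (hf y hy) _
  · exact mul_eq_zero_of_right _ (hg _ (by linarith))

lemma convolution_le_of_le {C : ℝ} (hf : Integrable f) (hf_nonneg : ∀ x, 0 ≤ f x)
    (hfg : ConvolutionExists f g (ContinuousLinearMap.lsmul ℝ ℝ)) (hg : ∀ x, g x ≤ C) (r : ℝ) :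
    (f ⋆ g) r ≤ C * ∫ x, f x := by
  rw [← integral_const_mul]
  exact integral_mono (hfg r) (hf.const_mul C) fun y =>
    (mul_le_mul_of_nonneg_left (hg _) (hf_nonneg y)).trans_eq (mul_comm _ _)

end Convolution

noncomputable def densityMeasure (f : ℝ → ℝ) : Measure ℝ :=
  volume.withDensity fun x => ENNReal.ofReal (f x)

section DensityMeasure

variable {f g : ℝ → ℝ}

lemma densityMeasure_apply (hf : Integrable f) (hf_nonneg : ∀ x, 0 ≤ f x) {B : Set ℝ}
    (hB : MeasurableSet B) : densityMeasure f B = ENNReal.ofReal (∫ x in B, f x) := by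
  rw [densityMeasure, withDensity_apply _ hB,
    ofReal_integral_eq_lintegral_ofReal hf.integrableOn (ae_of_all _ hf_nonneg)]

lemma densityMeasure_conv_densityMeasure (hf : Measurable f) (hg : Measurable g)
    (hf_nonneg : ∀ x, 0 ≤ f x) (hg_nonneg : ∀ x, 0 ≤ g x)
    (hfg : ConvolutionExists f g (ContinuousLinearMap.lsmul ℝ ℝ)) :
    densityMeasure f ∗ densityMeasure g = densityMeasure (f ⋆ g) := by
  rw [densityMeasure, densityMeasure, conv_withDensity_eq_lconvolution hf.ennreal_ofReal
    hg.ennreal_ofReal, densityMeasure]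
  congr 1 with r
  change _ = ENNReal.ofReal (∫ t, f t * g (r - t))
  rw [lconvolution_def, ofReal_integral_eq_lintegral_ofReal (f := fun t => f t * g (r - t))
    (hfg r) (ae_of_all _ fun y => mul_nonneg (hf_nonneg y) (hg_nonneg _))]
  simp_rw [neg_add_eq_sub, ENNReal.ofReal_mul (hf_nonneg _)]

lemma map_const_mul_densityMeasure (hf : Measurable f) {c : ℝ} (hc : 0 < c) :
    (densityMeasure f).map (c * ·) = densityMeasure fun x => c⁻¹ * f (x / c) := by
  ext B hB
  have h_mul : Measurable (c * · : ℝ → ℝ) := measurable_const_mul c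
  have h_div : Measurable fun x => ENNReal.ofReal (f (x / c)) :=
    (hf.comp (measurable_id.div_const c)).ennreal_ofReal
  rw [Measure.map_apply h_mul hB, densityMeasure, densityMeasure, withDensity_apply _ hB,
    withDensity_apply _ (h_mul hB)]
  simp_rw [ENNReal.ofReal_mul (inv_nonneg.2 hc.le)]
  rw [lintegral_const_mul _ h_div, ← smul_eq_mul, ← lintegral_smul_measure,
    ← Measure.restrict_smul, ← abs_of_pos (inv_pos.2 hc), ← Real.map_volume_mul_left hc.ne',
    setLIntegral_map hB h_div h_mul]
  simp_rw [mul_div_cancel_left₀ _ hc.ne']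

lemma map_const_mul_eq_densityMeasure {Ω : Type*} [MeasurableSpace Ω] {P : Measure Ω}
    {X : Ω → ℝ} (hX : Measurable X) (hf : Measurable f) (hlaw : P.map X = densityMeasure f)
    {c : ℝ} (hc : 0 < c) :
    P.map (fun ω => c * X ω) = densityMeasure fun x => c⁻¹ * f (x / c) := by
  rw [show (fun ω => c * X ω) = (c * ·) ∘ X from rfl,
    ← Measure.map_map (measurable_const_mul c) hX, hlaw, map_const_mul_densityMeasure hf hc]

end DensityMeasure

structure IsTailDensity (f : ℝ → ℝ) (q K : ℝ) : Prop where
  nonneg : ∀ x, 0 ≤ f x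
  eq_zero_of_nonpos : ∀ x ≤ 0, f x = 0
  bdd : ∃ C, ∀ x, f x ≤ C
  continuousOn : ContinuousOn f (Ioi 0)
  integral_eq_one : ∫ x, f x = 1
  tendsto_rpow_mul : Tendsto (fun r => r ^ (1 + q) * f r) atTop (𝓝 K)

namespace IsTailDensity

variable {f g : ℝ → ℝ} {q K Kf Kg : ℝ}

lemma integrable (hf : IsTailDensity f q K) : Integrable f :=
  integrable_of_integral_eq_one hf.integral_eq_one

lemma measurable (hf : IsTailDensity f q K) : Measurable f := by
  classical
  convert hf.continuousOn.measurable_piecewise continuousOn_const measurableSet_Ioi (g := 0)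
  ext x
  by_cases hx : x ∈ Ioi 0
  · simp [hx]
  · simp [hx, hf.eq_zero_of_nonpos x (not_lt.1 hx)]

lemma abs_le (hf : IsTailDensity f q K) : ∃ C, ∀ x, |f x| ≤ C := by
  simpa only [abs_of_nonneg (hf.nonneg _)] using hf.bdd

lemma continuousOn_compl_zero (hf : IsTailDensity f q K) : ContinuousOn f {0}ᶜ := by
  intro x hx
  refine ContinuousAt.continuousWithinAt ?_
  rcases lt_or_gt_of_ne hx with hx | hx
  · refine (continuousAt_const (y := (0 : ℝ))).congr ?_
    filter_upwards [Iio_mem_nhds hx] with y hy using (hf.eq_zero_of_nonpos y hy.le).symm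
  · exact hf.continuousOn.continuousAt (Ioi_mem_nhds hx)

lemma convolutionExists (hf : IsTailDensity f q Kf) (hg : IsTailDensity g q Kg) :
    ConvolutionExists f g (ContinuousLinearMap.lsmul ℝ ℝ) :=
  have ⟨_, hC⟩ := hg.abs_le
  convolutionExists_of_bdd hf.integrable hg.measurable hC

lemma convolution (hq : 0 ≤ 1 + q) (hf : IsTailDensity f q Kf) (hg : IsTailDensity g q Kg) :
    IsTailDensity (f ⋆ g) q (Kf + Kg) := by
  obtain ⟨C, hC⟩ := hg.bdd
  obtain ⟨C', hC'⟩ := hg.abs_le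
  refine ⟨convolution_nonneg hf.nonneg hg.nonneg, fun _ => convolution_eq_zero_of_nonpos
      hf.eq_zero_of_nonpos hg.eq_zero_of_nonpos, ⟨C, fun r => ?_⟩,
    (continuous_convolution_of_continuousOn_compl_singleton hf.integrable hg.measurable hC'
      hg.continuousOn_compl_zero).continuousOn, ?_, ?_⟩
  · simpa [hf.integral_eq_one] using
      convolution_le_of_le hf.integrable hf.nonneg (hf.convolutionExists hg) hC r
  · simp [integral_convolution _ hf.integrable hg.integrable, hf.integral_eq_one,
      hg.integral_eq_one]
  · simpa [hf.integral_eq_one, hg.integral_eq_one, add_comm] using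
      tendsto_rpow_mul_convolution hq hf.integrable hg.integrable hf.measurable hg.measurable
        (hf.convolutionExists hg) hf.tendsto_rpow_mul hg.tendsto_rpow_mul

lemma comp_div (hf : IsTailDensity f q K) {c : ℝ} (hc : 0 < c) :
    IsTailDensity (fun x => c⁻¹ * f (x / c)) q (c ^ q * K) := by
  obtain ⟨C, hC⟩ := hf.bdd
  refine ⟨fun x => mul_nonneg (by positivity) (hf.nonneg _), fun x hx => ?_,
    ⟨c⁻¹ * C, fun x => by gcongr; exact hC _⟩, ?_, ?_, ?_⟩
  · rw [hf.eq_zero_of_nonpos _ (div_nonpos_of_nonpos_of_nonneg hx hc.le), mul_zero]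
  · exact continuousOn_const.mul (hf.continuousOn.comp (continuousOn_id.div_const c)
      fun x hx => div_pos hx hc)
  · rw [integral_const_mul, Measure.integral_comp_div f c, abs_of_pos hc, smul_eq_mul,
      hf.integral_eq_one, mul_one, inv_mul_cancel₀ hc.ne']
  · refine ((hf.tendsto_rpow_mul.comp (tendsto_id.atTop_div_const hc)).const_mul
      (c ^ q)).congr' ?_
    filter_upwards [eventually_gt_atTop 0] with r hr
    have hr_eq : r ^ (1 + q) = c * c ^ q * (r / c) ^ (1 + q) := by
      rw [Real.div_rpow hr.le hc.le, Real.rpow_add hc, Real.rpow_one]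
      field_simp
    simp only [Function.comp_apply, id, hr_eq]
    field_simp

lemma densityMeasure_apply (hf : IsTailDensity f q K)
    {B : Set ℝ} (hB : MeasurableSet B) :
    densityMeasure f B = ENNReal.ofReal (∫ x in B ∩ Ioi 0, f x) := by
  rw [_root_.densityMeasure_apply hf.integrable hf.nonneg hB, ← setIntegral_indicator
    measurableSet_Ioi]
  congr 1
  refine setIntegral_congr_fun hB fun x _ => ?_
  by_cases hx : x ∈ Ioi 0
  · rw [indicator_of_mem hx]
  · rw [indicator_of_notMem hx, hf.eq_zero_of_nonpos x (not_lt.1 hx)]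

end IsTailDensity

lemma setIntegral_Ioi_eq_one_of_apply_eq {μ : Measure ℝ} [IsProbabilityMeasure μ] {a : ℝ → ℝ}
    (h : ∀ B, MeasurableSet B → μ B = ENNReal.ofReal (∫ r in B ∩ Ioi 0, a r)) :
    ∫ r in Ioi 0, a r = 1 :=
  ENNReal.ofReal_eq_one.1 (by simpa using (h univ MeasurableSet.univ).symm)

lemma isTailDensity_indicator_Ioi {a : ℝ → ℝ} {q K C : ℝ} (ha_nonneg : ∀ r, 0 ≤ a r)
    (ha_bdd : ∀ r, a r ≤ C) (ha_cont : ContinuousOn a (Ioi 0)) (ha_int : ∫ r in Ioi 0, a r = 1)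
    (ha_tail : Tendsto (fun r => r ^ (1 + q) * a r) atTop (𝓝 K)) :
    IsTailDensity ((Ioi 0).indicator a) q K := by
  refine ⟨indicator_nonneg fun r _ => ha_nonneg r,
    fun r hr => indicator_of_notMem (not_lt.2 hr) _, ⟨max C 0, fun r => ?_⟩,
    ha_cont.congr eqOn_indicator, ?_, ?_⟩
  · by_cases hr : r ∈ Ioi 0
    · simpa [indicator_of_mem hr] using Or.inl (ha_bdd r)
    · simp [indicator_of_notMem hr]
  · rwa [integral_indicator measurableSet_Ioi]
  · refine ha_tail.congr' ?_
    filter_upwards [eventually_gt_atTop 0] with r hr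
    rw [indicator_of_mem (mem_Ioi.2 hr)]

lemma exists_isTailDensity_map_sum {Ω ι : Type*} [MeasurableSpace Ω] {P : Measure Ω}
    [IsFiniteMeasure P] {X : ι → Ω → ℝ} (hX : ∀ i, Measurable (X i)) (hindep : iIndepFun X P)
    {q : ℝ} (hq : 0 ≤ 1 + q) {f : ι → ℝ → ℝ} {K : ι → ℝ} {s : Finset ι} (hs : s.Nonempty)
    (hf : ∀ i ∈ s, IsTailDensity (f i) q (K i))
    (hlaw : ∀ i ∈ s, P.map (X i) = densityMeasure (f i)) :
    ∃ g, IsTailDensity g q (∑ i ∈ s, K i) ∧ P.map (∑ i ∈ s, X i) = densityMeasure g := by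
  induction hs using Finset.Nonempty.cons_induction with
  | singleton i => exact ⟨f i, by simpa using hf i, by simpa using hlaw i⟩
  | cons i s hi hs ih =>
    simp only [Finset.mem_cons, forall_eq_or_imp] at hf hlaw
    obtain ⟨g, hg, hg_law⟩ := ih hf.2 hlaw.2
    refine ⟨g ⋆ f i, by simpa [add_comm] using hg.convolution hq hf.1, ?_⟩
    rw [Finset.sum_cons, add_comm,
      (hindep.indepFun_finsetSum_of_notMem hX hi).map_add_eq_map_conv_map (by fun_prop) (hX i),
      hg_law, hlaw.1,
      densityMeasure_conv_densityMeasure hg.measurable hf.1.measurable hg.nonneg hf.1.nonneg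
        (hg.convolutionExists hf.1)]

theorem stmt_13_general {Ω : Type*} [MeasurableSpace Ω] (P : Measure Ω) [IsProbabilityMeasure P]
    (A : ℕ → Ω → ℝ) (hmeas : ∀ i, Measurable (A i))
    (hindep : iIndepFun A P)
    (hident : ∀ i, Measure.map (A i) P = Measure.map (A 0) P)
    (a : ℝ → ℝ) (ha_nn : ∀ r, 0 ≤ a r)
    (K₀ : ℝ) (ha_bdd : ∀ r, a r ≤ K₀)
    (ha_cont : ContinuousOn a (Set.Ioi 0))
    (ha_dens : ∀ B : Set ℝ, MeasurableSet B →
      Measure.map (A 0) P B = ENNReal.ofReal (∫ r in B ∩ Set.Ioi 0, a r))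
    (q K : ℝ) (hq : 0 < q)
    (ha_asymp : Tendsto (fun r : ℝ => r ^ (1 + q) * a r) atTop (nhds K))
    (m : ℕ) (w : ℕ → ℝ) (hw : ∀ j, 0 ≤ w j)
    (hw_ne : ∃ j < m, 0 < w j) :
    ∃ aw : ℝ → ℝ, (∀ r, 0 ≤ aw r) ∧ ContinuousOn aw (Set.Ioi 0) ∧
      (∀ B : Set ℝ, MeasurableSet B →
        Measure.map (fun ω => ∑ j ∈ Finset.range m, w j * A j ω) P B =
          ENNReal.ofReal (∫ r in B ∩ Set.Ioi 0, aw r)) ∧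
      Tendsto (fun r : ℝ => r ^ (1 + q) * aw r) atTop
        (nhds (K * ∑ j ∈ Finset.range m, w j ^ q)) := by
  have := Measure.isProbabilityMeasure_map (μ := P) (hmeas 0).aemeasurable
  have ha : IsTailDensity ((Ioi 0).indicator a) q K := isTailDensity_indicator_Ioi ha_nn ha_bdd
    ha_cont (setIntegral_Ioi_eq_one_of_apply_eq ha_dens) ha_asymp
  have ha_law : ∀ j, P.map (A j) = densityMeasure ((Ioi 0).indicator a) := fun j => by
    ext B hB
    rw [hident j, ha_dens B hB, densityMeasure_apply ha.integrable ha.nonneg hB,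
      setIntegral_indicator measurableSet_Ioi]
  set J := (Finset.range m).filter (0 < w ·)
  have hJ : J.Nonempty := by
    obtain ⟨j, hjm, hj⟩ := hw_ne
    exact ⟨j, Finset.mem_filter.2 ⟨Finset.mem_range.2 hjm, hj⟩⟩
  obtain ⟨g, hg, hg_law⟩ := exists_isTailDensity_map_sum (fun j => (hmeas j).const_mul (w j))
    (hindep.comp _ fun j => measurable_const_mul (w j)) (by linarith) hJ
    (fun j hj => ha.comp_div (Finset.mem_filter.1 hj).2)
    (fun j hj => map_const_mul_eq_densityMeasure (hmeas j) ha.measurable (ha_law j)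
      (Finset.mem_filter.1 hj).2)
  have h_pos : ∀ j, w j ≠ 0 → 0 < w j := fun j hj => (hw j).lt_of_ne' hj
  have h_sum : (fun ω => ∑ j ∈ Finset.range m, w j * A j ω) = ∑ j ∈ J, fun ω => w j * A j ω :=
    funext fun ω => by
      rw [Finset.sum_apply, Finset.sum_filter_of_ne fun j _ hj => h_pos j (left_ne_zero_of_mul hj)]
  have h_const : K * ∑ j ∈ Finset.range m, w j ^ q = ∑ j ∈ J, w j ^ q * K := by
    rw [Finset.mul_sum, Finset.sum_filter_of_ne fun j _ hj => h_pos j fun h_zero => by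
      simp [h_zero, Real.zero_rpow hq.ne'] at hj]
    simp_rw [mul_comm]
  refine ⟨g, hg.nonneg, hg.continuousOn, fun B hB => ?_, h_const ▸ hg.tendsto_rpow_mul⟩
  rw [h_sum, hg_law, hg.densityMeasure_apply hB]

/-- For i.i.d. nonnegative random variables whose common law has a bounded
continuous density `a` on `(0,∞)` with `r^{1+q}·a(r) → K > 0`, and nonnegative weights
`w₁,…,w_m` not all zero, the finite sum `S = Σ_{j<m} w_j A_j` has a continuous density `a_w`
on `(0,∞)` and `r^{1+q}·a_w(r) → K·Σ_{j<m} w_j^q`. -/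
theorem stmt_13 {Ω : Type*} [MeasurableSpace Ω] (P : Measure Ω) [IsProbabilityMeasure P]
    (A : ℕ → Ω → ℝ) (hmeas : ∀ i, Measurable (A i))
    (hindep : iIndepFun A P)
    (hident : ∀ i, Measure.map (A i) P = Measure.map (A 0) P)
    (hnn : ∀ i, ∀ᵐ ω ∂P, 0 ≤ A i ω)
    (a : ℝ → ℝ) (ha_meas : Measurable a) (ha_nn : ∀ r, 0 ≤ a r)
    (K₀ : ℝ) (ha_bdd : ∀ r, a r ≤ K₀)
    (ha_cont : ContinuousOn a (Set.Ioi 0))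
    (ha_dens : ∀ B : Set ℝ, MeasurableSet B →
      Measure.map (A 0) P B = ENNReal.ofReal (∫ r in B ∩ Set.Ioi 0, a r))
    (q K : ℝ) (hq : 0 < q) (hK : 0 < K)
    (ha_asymp : Tendsto (fun r : ℝ => r ^ (1 + q) * a r) atTop (nhds K))
    (m : ℕ) (hm : 1 ≤ m) (w : ℕ → ℝ) (hw : ∀ j, 0 ≤ w j)
    (hw_ne : ∃ j < m, 0 < w j) :
    ∃ aw : ℝ → ℝ, (∀ r, 0 ≤ aw r) ∧ ContinuousOn aw (Set.Ioi 0) ∧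
      (∀ B : Set ℝ, MeasurableSet B →
        Measure.map (fun ω => ∑ j ∈ Finset.range m, w j * A j ω) P B =
          ENNReal.ofReal (∫ r in B ∩ Set.Ioi 0, aw r)) ∧
      Tendsto (fun r : ℝ => r ^ (1 + q) * aw r) atTop
        (nhds (K * ∑ j ∈ Finset.range m, w j ^ q)) :=
  stmt_13_general P A hmeas hindep hident a ha_nn K₀ ha_bdd ha_cont ha_dens q K hq ha_asymp m w hw
    hw_ne
end

section
/- Let (A_i)_{i≥1} be a sequence of independent, identically distributed nonnegative integrable real random variables whose common law has a density a bounded by K = sup_{x} a(x) < ∞. Let (w_i)_{i≥1} be nonnegative reals with Σ_i w_i < ∞ and w_j > 0 for at least one index j. Then the series S = Σ_{i≥1} w_i A_i converges almost surely and its law has a density bounded above by K / (sup_{i≥1} w_i). -/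
open MeasureTheory ProbabilityTheory

open scoped ENNReal

/-!
Let `c = w i₀` be the largest weight; it exists because `w i → 0`. Splitting off the `i₀`-th term
writes the series as `c * A i₀ + R` with `R` independent of `A i₀`, so its law is the convolution
of the law of `c * A i₀`, whose density `c⁻¹ * a (c⁻¹ * x)` is bounded by `K / c`, with the law
of `R`. Convolving a density bounded by `M` with a probability measure gives a density that is
again bounded by `M`.
-/

theorem exists_isGreatest_range_of_summable {ι : Type*} {w : ι → ℝ} (hw : Summable w) {j : ι}
    (hj : 0 < w j) : ∃ i₀, IsGreatest (Set.range w) (w i₀) := by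
  have hfin : {i | w j ≤ w i}.Finite := by
    simpa only [not_lt] using
      Filter.eventually_cofinite.mp (hw.tendsto_cofinite_zero.eventually (gt_mem_nhds hj))
  obtain ⟨i₀, hi₀, hmax⟩ := Set.exists_max_image _ w hfin ⟨j, le_refl (w j)⟩
  refine ⟨i₀, ⟨i₀, rfl⟩, ?_⟩
  rintro _ ⟨i, rfl⟩
  by_cases hi : w j ≤ w i
  · exact hmax i hi
  · exact (not_le.mp hi).le.trans hi₀

theorem ae_summable_mul_of_identDistrib {Ω ι : Type*} [MeasurableSpace Ω] [Countable ι]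
    {P : Measure Ω} {A : ι → Ω → ℝ} {X : Ω → ℝ} (hA : ∀ i, IdentDistrib (A i) X P P)
    (hX : Integrable X P) {w : ι → ℝ} (hw : Summable w) :
    ∀ᵐ ω ∂P, Summable fun i => w i * A i ω := by
  have hnorm : ∑' i, eLpNorm (w i • A i) 1 P ≠ ∞ := by
    simp only [eLpNorm_const_smul, (hA _).eLpNorm_eq, ENNReal.tsum_mul_right]
    exact ENNReal.mul_ne_top (tsum_enorm_ne_top_iff_summable_norm.mpr hw.norm)
      (memLp_one_iff_integrable.mpr hX).eLpNorm_ne_top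
  filter_upwards [summable_norm_of_tsum_eLpNorm_ne_top le_rfl
    (fun i => ((hA i).aemeasurable_fst.const_smul (w i)).aestronglyMeasurable) hnorm]
    with ω hω
  exact Summable.of_norm hω

theorem ProbabilityTheory.iIndepFun.indepFun_set {Ω ι : Type*} [MeasurableSpace Ω] {μ : Measure Ω}
    {β : ι → Type*} {m : ∀ i, MeasurableSpace (β i)} {f : ∀ i, Ω → β i}
    (hf : ∀ i, Measurable (f i)) (h : iIndepFun f μ) {S T : Set ι} (hST : Disjoint S T) :
    IndepFun (fun ω (i : S) => f i ω) (fun ω (i : T) => f i ω) μ := by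
  have hle (U : Set ι) : MeasurableSpace.comap (fun ω (i : U) => f i ω) MeasurableSpace.pi ≤
      ⨆ i ∈ U, MeasurableSpace.comap (f i) (m i) :=
    measurable_iff_comap_le.mp <|
      (@measurable_pi_iff _ _ _ (⨆ i ∈ U, (m i).comap (f i)) _ _).mpr fun i =>
        Measurable.of_comap_le <| le_iSup₂ (f := fun i (_ : i ∈ U) => (m i).comap (f i)) i.1 i.2
  rw [IndepFun_iff_Indep]
  exact indep_of_indep_of_le_left (indep_of_indep_of_le_right
    (indep_iSup_of_disjoint (fun i => (hf i).comap_le) h.iIndep hST) (hle T)) (hle S)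

theorem ProbabilityTheory.iIndepFun.map_tsum_mul_eq_conv {Ω ι : Type*} [MeasurableSpace Ω]
    [Countable ι] {P : Measure Ω} [IsFiniteMeasure P] {A : ι → Ω → ℝ}
    (hA : ∀ i, Measurable (A i)) (h : iIndepFun A P) {w : ι → ℝ}
    (hs : ∀ᵐ ω ∂P, Summable fun i => w i * A i ω) (k : ι) :
    P.map (fun ω => ∑' i, w i * A i ω) =
      (P.map (A k)).map (w k * ·) ∗ P.map fun ω => ∑' i : ↥({k}ᶜ : Set ι), w i * A i ω := by
  let F : (↥({k}ᶜ : Set ι) → ℝ) → ℝ := fun x => ∑' i : ↥({k}ᶜ : Set ι), w i * x i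
  have hF : Measurable F := Measurable.tsum fun i => (measurable_pi_apply i).const_mul _
  let R := F ∘ fun ω (i : ↥({k}ᶜ : Set ι)) => A i ω
  have hR : Measurable R := hF.comp (measurable_pi_lambda _ fun i => hA i)
  have hindep : IndepFun ((w k * ·) ∘ A k) R P :=
    (h.indepFun_set hA (S := {k}) disjoint_compl_right).comp
      (φ := fun x : ({k} : Set ι) → ℝ => w k * x ⟨k, rfl⟩) (by fun_prop) hF
  have hsplit : (fun ω => ∑' i, w i * A i ω) =ᵐ[P] (w k * ·) ∘ A k + R := by
    filter_upwards [hs] with ω hω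
    have := hω.sum_add_tsum_compl (s := {k})
    rw [Finset.sum_singleton, Finset.coe_singleton] at this
    exact this.symm
  rw [Measure.map_congr hsplit,
    hindep.map_add_eq_map_conv_map ((measurable_const_mul _).comp (hA k)) hR,
    ← Measure.map_map (measurable_const_mul _) (hA k)]
  rfl

def HasDensityLE {α : Type*} [MeasurableSpace α] (μ ρ : Measure α) (M : ℝ≥0∞) : Prop :=
  ∃ f : α → ℝ≥0∞, Measurable f ∧ (∀ x, f x ≤ M) ∧ μ = ρ.withDensity f

theorem hasDensityLE_of_forall_eq_setIntegral {μ : Measure ℝ} [IsLocallyFiniteMeasure μ]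
    {a : ℝ → ℝ} (ha : Measurable a) (ha_nn : ∀ x, 0 ≤ a x) {K : ℝ} (haK : ∀ x, a x ≤ K)
    (h : ∀ B, MeasurableSet B → μ B = ENNReal.ofReal (∫ x in B, a x)) :
    HasDensityLE μ volume (ENNReal.ofReal K) := by
  refine ⟨fun x => ENNReal.ofReal (a x), ha.ennreal_ofReal,
    fun x => ENNReal.ofReal_le_ofReal (haK x), Measure.ext_of_Ioc _ _ fun s t _ => ?_⟩
  have hloc : LocallyIntegrable a volume :=
    (locallyIntegrable_const K).mono ha.aestronglyMeasurable <| .of_forall fun x => by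
      simp only [Real.norm_eq_abs, abs_of_nonneg (ha_nn x)]
      exact (haK x).trans (le_abs_self K)
  rw [h _ measurableSet_Ioc, withDensity_apply _ measurableSet_Ioc,
    ofReal_integral_eq_lintegral_ofReal
      ((hloc.integrableOn_isCompact isCompact_Icc).mono_set Set.Ioc_subset_Icc_self)
      (.of_forall fun x => ha_nn x)]

theorem map_const_mul_withDensity {f : ℝ → ℝ≥0∞} (hf : Measurable f) {c : ℝ} (hc : c ≠ 0) :
    (volume.withDensity f).map (c * ·) =
      volume.withDensity fun y => ENNReal.ofReal |c⁻¹| * f (c⁻¹ * y) := by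
  have hmul : Measurable (c * · : ℝ → ℝ) := measurable_const_mul c
  refine Measure.ext_of_lintegral _ fun φ hφ => ?_
  have hg : Measurable fun y => f (c⁻¹ * y) * φ y := (hf.comp (measurable_const_mul _)).mul hφ
  calc ∫⁻ y, φ y ∂(volume.withDensity f).map (c * ·)
      = ∫⁻ x, f (c⁻¹ * (c * x)) * φ (c * x) := by
        rw [lintegral_map hφ hmul, lintegral_withDensity_eq_lintegral_mul _ hf
          (by fun_prop : Measurable fun x => φ (c * x))]
        simp only [inv_mul_cancel_left₀ hc, Pi.mul_apply]
    _ = ∫⁻ y, f (c⁻¹ * y) * φ y ∂volume.map (c * ·) := (lintegral_map hg hmul).symm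
    _ = _ := by
        rw [Real.map_volume_mul_left hc, lintegral_smul_measure,
          lintegral_withDensity_eq_lintegral_mul _
            (by fun_prop : Measurable fun y => ENNReal.ofReal |c⁻¹| * f (c⁻¹ * y)) hφ,
          smul_eq_mul, ← lintegral_const_mul _ hg]
        simp only [Pi.mul_apply, mul_assoc]

theorem HasDensityLE.map_const_mul {μ : Measure ℝ} {M : ℝ≥0∞} (h : HasDensityLE μ volume M)
    {c : ℝ} (hc : c ≠ 0) : HasDensityLE (μ.map (c * ·)) volume (ENNReal.ofReal |c⁻¹| * M) := by
  obtain ⟨f, hf, hfM, rfl⟩ := h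
  exact ⟨_, measurable_const.mul (hf.comp (measurable_const_mul _)),
    fun y => mul_le_mul_right (hfM _) _, map_const_mul_withDensity hf hc⟩

section Convolution

variable {G : Type*} [AddGroup G] [MeasurableSpace G] [MeasurableAdd₂ G] [MeasurableNeg G]
  {ρ : Measure G} [SFinite ρ] [ρ.IsAddRightInvariant]

theorem withDensity_conv {f : G → ℝ≥0∞} (hf : Measurable f) (ν : Measure G) [SFinite ν] :
    ρ.withDensity f ∗ ν = ρ.withDensity fun y => ∫⁻ r, f (y - r) ∂ν := by
  refine Measure.ext_of_lintegral _ fun φ hφ => ?_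
  calc ∫⁻ y, φ y ∂ρ.withDensity f ∗ ν
      = ∫⁻ x, ∫⁻ r, f x * φ (x + r) ∂ν ∂ρ := by
        rw [Measure.lintegral_conv hφ, lintegral_withDensity_eq_lintegral_mul _ hf
          (by fun_prop)]
        congr 1 with x
        exact (lintegral_const_mul _ (by fun_prop)).symm
    _ = ∫⁻ r, ∫⁻ x, f x * φ (x + r) ∂ρ ∂ν := lintegral_lintegral_swap (by fun_prop)
    _ = ∫⁻ r, ∫⁻ y, f (y - r) * φ y ∂ρ ∂ν := by
        congr 1 with r
        rw [← lintegral_add_right_eq_self (fun y => f (y - r) * φ y) r]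
        simp only [add_sub_cancel_right]
    _ = ∫⁻ y, (∫⁻ r, f (y - r) ∂ν) * φ y ∂ρ := by
        rw [lintegral_lintegral_swap (by fun_prop)]
        congr 1 with y
        exact lintegral_mul_const _ (hf.comp (measurable_const_sub y))
    _ = _ := (lintegral_withDensity_eq_lintegral_mul _ (by fun_prop) hφ).symm

theorem HasDensityLE.conv {μ : Measure G} {M : ℝ≥0∞} (h : HasDensityLE μ ρ M) (ν : Measure G)
    [IsProbabilityMeasure ν] : HasDensityLE (μ ∗ ν) ρ M := by
  obtain ⟨f, hf, hfM, rfl⟩ := h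
  refine ⟨_, ?_, fun y => ?_, withDensity_conv hf ν⟩
  · exact (hf.comp measurable_sub).lintegral_prod_right'
  · calc ∫⁻ r, f (y - r) ∂ν ≤ ∫⁻ _, M ∂ν := lintegral_mono fun r => hfM _
      _ = M := by rw [lintegral_const, measure_univ, mul_one]

end Convolution

theorem HasDensityLE.exists_real_density {α : Type*} [MeasurableSpace α] {μ ρ : Measure α}
    [IsFiniteMeasure μ] {M : ℝ} (h : HasDensityLE μ ρ (ENNReal.ofReal M)) (hM : 0 ≤ M) :
    ∃ g : α → ℝ, Measurable g ∧ (∀ x, 0 ≤ g x) ∧ (∀ x, g x ≤ M) ∧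
      ∀ B, MeasurableSet B → μ B = ENNReal.ofReal (∫ x in B, g x ∂ρ) := by
  obtain ⟨f, hf, hfM, rfl⟩ := h
  have hf_ne_top x : f x ≠ ∞ := ((hfM x).trans_lt ENNReal.ofReal_lt_top).ne
  refine ⟨fun x => (f x).toReal, hf.ennreal_toReal, fun x => ENNReal.toReal_nonneg,
    fun x => ENNReal.toReal_le_of_le_ofReal hM (hfM x), fun B hB => ?_⟩
  have hfin : ∫⁻ x in B, f x ∂ρ ≠ ∞ := by
    rw [← withDensity_apply _ hB]
    exact measure_ne_top _ _
  rw [withDensity_apply _ hB, ofReal_integral_eq_lintegral_ofReal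
    (integrable_toReal_of_lintegral_ne_top hf.aemeasurable hfin)
    (.of_forall fun x => ENNReal.toReal_nonneg)]
  simp only [ENNReal.ofReal_toReal (hf_ne_top _)]

theorem stmt_16_general {Ω : Type*} [MeasurableSpace Ω] (P : Measure Ω) [IsProbabilityMeasure P]
    (A : ℕ → Ω → ℝ) (hmeas : ∀ i, Measurable (A i))
    (hindep : iIndepFun A P)
    (hident : ∀ i, Measure.map (A i) P = Measure.map (A 0) P)
    (hint : ∀ i, Integrable (A i) P)
    (a : ℝ → ℝ) (ha_meas : Measurable a) (ha_nn : ∀ x, 0 ≤ a x)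
    (K : ℝ) (ha_bdd : ∀ x, a x ≤ K)
    (ha_dens : ∀ B : Set ℝ, MeasurableSet B →
      Measure.map (A 0) P B = ENNReal.ofReal (∫ x in B, a x))
    (w : ℕ → ℝ) (hsum : Summable w) (j : ℕ) (hj : 0 < w j) :
    (∀ᵐ ω ∂P, Summable fun i => w i * A i ω) ∧
    ∃ g : ℝ → ℝ, Measurable g ∧ (∀ x, 0 ≤ g x) ∧ (∀ x, g x ≤ K / ⨆ i, w i) ∧
      ∀ B : Set ℝ, MeasurableSet B →
        Measure.map (fun ω => ∑' i, w i * A i ω) P B = ENNReal.ofReal (∫ x in B, g x) := by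
  have hsummable := ae_summable_mul_of_identDistrib
    (fun i => ⟨(hmeas i).aemeasurable, (hmeas 0).aemeasurable, hident i⟩) (hint 0) hsum
  refine ⟨hsummable, ?_⟩
  obtain ⟨i₀, hi₀⟩ := exists_isGreatest_range_of_summable hsum hj
  have hc : 0 < w i₀ := hj.trans_le (hi₀.2 ⟨j, rfl⟩)
  have hscaled : HasDensityLE ((P.map (A i₀)).map (w i₀ * ·)) volume
      (ENNReal.ofReal (K / w i₀)) := by
    rw [hident i₀]
    convert (hasDensityLE_of_forall_eq_setIntegral ha_meas ha_nn ha_bdd ha_dens).map_const_mul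
      hc.ne' using 1
    rw [abs_of_pos (inv_pos.mpr hc), ← ENNReal.ofReal_mul (inv_nonneg.mpr hc.le), inv_mul_eq_div]
  have : IsProbabilityMeasure (P.map fun ω => ∑' i : ↥({i₀}ᶜ : Set ℕ), w i * A i ω) :=
    Measure.isProbabilityMeasure_map (by fun_prop)
  have hdens := hindep.map_tsum_mul_eq_conv hmeas hsummable i₀ ▸ hscaled.conv _
  have : IsProbabilityMeasure (P.map fun ω => ∑' i, w i * A i ω) :=
    Measure.isProbabilityMeasure_map (by fun_prop)
  rw [show (⨆ i, w i) = w i₀ from hi₀.csSup_eq]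
  exact hdens.exists_real_density (div_nonneg ((ha_nn 0).trans (ha_bdd 0)) hc.le)

/-- For i.i.d. nonnegative integrable random variables whose common law has
a density bounded by `K`, and nonnegative summable weights with some `w_j > 0`, the series
`S = Σ w_i A_i` converges a.s. and its law has a density bounded by `K / (sup_i w_i)`. -/
theorem stmt_16 {Ω : Type*} [MeasurableSpace Ω] (P : Measure Ω) [IsProbabilityMeasure P]
    (A : ℕ → Ω → ℝ) (hmeas : ∀ i, Measurable (A i))
    (hindep : iIndepFun A P)
    (hident : ∀ i, Measure.map (A i) P = Measure.map (A 0) P)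
    (hnn : ∀ i, ∀ᵐ ω ∂P, 0 ≤ A i ω) (hint : ∀ i, Integrable (A i) P)
    (a : ℝ → ℝ) (ha_meas : Measurable a) (ha_nn : ∀ x, 0 ≤ a x)
    (K : ℝ) (ha_bdd : ∀ x, a x ≤ K)
    (ha_dens : ∀ B : Set ℝ, MeasurableSet B →
      Measure.map (A 0) P B = ENNReal.ofReal (∫ x in B, a x))
    (w : ℕ → ℝ) (hw : ∀ i, 0 ≤ w i) (hsum : Summable w) (j : ℕ) (hj : 0 < w j) :
    (∀ᵐ ω ∂P, Summable fun i => w i * A i ω) ∧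
    ∃ g : ℝ → ℝ, Measurable g ∧ (∀ x, 0 ≤ g x) ∧ (∀ x, g x ≤ K / ⨆ i, w i) ∧
      ∀ B : Set ℝ, MeasurableSet B →
        Measure.map (fun ω => ∑' i, w i * A i ω) P B = ENNReal.ofReal (∫ x in B, g x) :=
  stmt_16_general P A hmeas hindep hident hint a ha_meas ha_nn K ha_bdd ha_dens w hsum j hj
end
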